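/- arXiv:2210.05235 — 7 statements merged into one kernel-verified Lean document; each statement's English description precedes it below -/
import Mathlib

section
/- For all n ≥ 1 and k ≥ 1, the online ordered Ramsey number r_o(K_{1,k}, P_n) equals k(n-1). -/
/-- A history of the online Ramsey game: the list of played edges (as pairs of
naturals with first < second) together with their colors (`true` = red, `false` = blue). -/
abbrev Hist := List ((ℕ × ℕ) × Bool)

/-- A Builder strategy is valid if it always plays a new edge `(u,v)` with `u < v`. -/
def ValidBuilder (B : Hist → ℕ × ℕ) : Prop :=
  ∀ h : Hist, (B h).1 < (B h).2 ∧ B h ∉ h.map Prod.fst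

/-- The history after `t` rounds of play starting from initial position `h0`,
with Builder strategy `B` and Painter strategy `P`. -/
def playFrom (h0 : Hist) (B : Hist → ℕ × ℕ) (P : Hist → ℕ × ℕ → Bool) : ℕ → Hist
  | 0 => h0
  | t + 1 =>
      playFrom h0 B P t ++
        [(B (playFrom h0 B P t), P (playFrom h0 B P t) (B (playFrom h0 B P t)))]

/-- The colored graph recorded in history `h` contains an order-isomorphic copy of the
ordered graph `G` (on linearly ordered vertex set `Fin k`) all of whose edges have color `c`. -/
def HasCopy {k : ℕ} (G : SimpleGraph (Fin k)) (c : Bool) (h : Hist) : Prop :=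
  ∃ f : Fin k → ℕ, StrictMono f ∧
    ∀ i j : Fin k, i < j → G.Adj i j → ((f i, f j), c) ∈ h

/-- Builder can force, from position `h0` and within `N` further rounds, a red copy of `G`
or a blue copy of `H`, against every Painter strategy. -/
def BuilderWinsFrom (h0 : Hist) {k l : ℕ} (G : SimpleGraph (Fin k))
    (H : SimpleGraph (Fin l)) (N : ℕ) : Prop :=
  ∃ B, ValidBuilder B ∧ ∀ P, ∃ t ≤ N,
    HasCopy G true (playFrom h0 B P t) ∨ HasCopy H false (playFrom h0 B P t)

/-- The online ordered Ramsey number `r_o(G, H)`. -/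
noncomputable def rOnline {k l : ℕ} (G : SimpleGraph (Fin k)) (H : SimpleGraph (Fin l)) : ℕ :=
  sInf {N | BuilderWinsFrom [] G H N}

/-- The ordered star `K_{1,k}` whose center is the leftmost vertex. -/
def orderedStar (k : ℕ) : SimpleGraph (Fin (k + 1)) :=
  SimpleGraph.fromRel (fun i _ => i = 0)

-- ===== auxiliary lemmas =====


lemma playFrom_succ (h0 : Hist) (B : Hist → ℕ × ℕ) (P : Hist → ℕ × ℕ → Bool) (t : ℕ) :
    playFrom h0 B P (t+1) = playFrom h0 B P t ++
      [(B (playFrom h0 B P t), P (playFrom h0 B P t) (B (playFrom h0 B P t)))] := rfl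

lemma length_playFrom (B : Hist → ℕ × ℕ) (P : Hist → ℕ × ℕ → Bool) (t : ℕ) :
    (playFrom [] B P t).length = t := by
  induction t with
  | zero => rfl
  | succ t ih => rw [playFrom_succ, List.length_append, ih]; rfl

lemma nodup_playFrom {B : Hist → ℕ × ℕ} (hB : ValidBuilder B) (P : Hist → ℕ × ℕ → Bool)
    (t : ℕ) : ((playFrom [] B P t).map Prod.fst).Nodup := by
  induction t with
  | zero => simp [playFrom]
  | succ t ih =>
      rw [playFrom_succ, List.map_append, List.nodup_append]
      refine ⟨ih, List.nodup_singleton _, ?_⟩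
      intro x hx y hx' hxy
      simp only [List.map_cons, List.map_nil, List.mem_singleton] at hx'
      subst hx'; subst hxy
      exact (hB _).2 hx

lemma hasCopy_star {k : ℕ} {h : Hist} {c : ℕ} {r : List ℕ}
    (hr : r.Chain' (· < ·)) (hlen : r.length = k) (hlt : ∀ w ∈ r, c < w)
    (hred : ∀ w ∈ r, ((c, w), true) ∈ h) : HasCopy (orderedStar k) true h := by
  have hl : (c :: r).length = k + 1 := by simp [hlen]
  have hchain : (c :: r).Chain' (· < ·) :=
    List.isChain_cons.mpr ⟨fun y hy => hlt y (List.mem_of_mem_head? hy), hr⟩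
  have hpw : (c :: r).Pairwise (· < ·) := List.isChain_iff_pairwise.mp hchain
  refine ⟨fun i => (c :: r).get (Fin.cast hl.symm i), ?_, ?_⟩
  · intro i j hij
    exact List.pairwise_iff_get.mp hpw _ _ (by simpa using hij)
  · intro i j hij hadj
    rcases (SimpleGraph.fromRel_adj _ _ _).mp hadj with ⟨hne, h0⟩
    have hj0 : (j : ℕ) ≠ 0 := by
      intro hj
      have : (i : ℕ) < (j : ℕ) := hij
      omega
    have hi0 : (i : ℕ) = 0 := by
      rcases h0 with h0 | h0
      · exact congrArg Fin.val h0
      · exact absurd (congrArg Fin.val h0) hj0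
    obtain ⟨jv, hjv⟩ := j
    obtain ⟨m, rfl⟩ : ∃ m, jv = m + 1 := by
      rcases jv with _ | m
      · exact absurd rfl hj0
      · exact ⟨m, rfl⟩
    have h1 : (c :: r).get (Fin.cast hl.symm i) = c := by
      have : (Fin.cast hl.symm i) = (⟨0, by omega⟩ : Fin (c :: r).length) := by
        apply Fin.ext; simpa using hi0
      rw [this]; rfl
    have h2 : (c :: r).get (Fin.cast hl.symm ⟨m+1, hjv⟩) = r.get ⟨m, by omega⟩ := rfl
    show (((c :: r).get (Fin.cast hl.symm i), (c :: r).get (Fin.cast hl.symm ⟨m+1, hjv⟩)), true) ∈ h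
    rw [h1, h2]
    exact hred _ (r.get_mem _)

lemma hasCopy_path {n : ℕ} {h : Hist} {p : List ℕ}
    (hp : p.Chain' (· < ·)) (hlen : p.length = n)
    (hblue : ∀ i (hi : i + 1 < p.length),
      ((p.get ⟨i, Nat.lt_of_succ_lt hi⟩, p.get ⟨i+1, hi⟩), false) ∈ h) :
    HasCopy (SimpleGraph.pathGraph n) false h := by
  have hpw : p.Pairwise (· < ·) := List.isChain_iff_pairwise.mp hp
  refine ⟨fun i => p.get (Fin.cast hlen.symm i), ?_, ?_⟩
  · intro i j hij
    exact List.pairwise_iff_get.mp hpw _ _ (by simpa using hij)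
  · intro i j hij hadj
    rcases SimpleGraph.pathGraph_adj.mp hadj with h1 | h1
    · have hj : (j : ℕ) = (i : ℕ) + 1 := h1.symm
      have hi1 : (i : ℕ) + 1 < p.length := by
        rw [hlen]; omega
      have := hblue i hi1
      show ((p.get (Fin.cast hlen.symm i), p.get (Fin.cast hlen.symm j)), false) ∈ h
      have e1 : (Fin.cast hlen.symm i) = (⟨(i : ℕ), Nat.lt_of_succ_lt hi1⟩ : Fin p.length) :=
        Fin.ext rfl
      have e2 : (Fin.cast hlen.symm j) = (⟨(i : ℕ) + 1, hi1⟩ : Fin p.length) :=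
        Fin.ext (by simpa using hj)
      rw [e1, e2]
      exact this
    · have : (i : ℕ) < (j : ℕ) := hij
      omega

-- ===== Builder strategy (upper bound) =====

def histMax (h : Hist) : ℕ := (h.map (fun e => e.1.1 + e.1.2)).sum

lemma le_histMax {h : Hist} {e : (ℕ × ℕ) × Bool} (he : e ∈ h) :
    e.1.1 ≤ histMax h ∧ e.1.2 ≤ histMax h := by
  have := List.single_le_sum (l := h.map fun e => e.1.1 + e.1.2)
    (fun x _ => Nat.zero_le x) _ (List.mem_map_of_mem he)
  simp only [histMax]
  constructor <;> omega

lemma histMax_append (h : Hist) (x : (ℕ × ℕ) × Bool) :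
    histMax (h ++ [x]) = histMax h + (x.1.1 + x.1.2) := by
  simp [histMax]

def endOf (h : Hist) : ℕ := h.foldl (fun e p => if p.2 then e else p.1.2) 0

lemma endOf_append (h : Hist) (x : (ℕ × ℕ) × Bool) :
    endOf (h ++ [x]) = if x.2 then endOf h else x.1.2 := by
  simp [endOf, List.foldl_append]

lemma endOf_le (h : Hist) : endOf h ≤ histMax h := by
  induction h using List.reverseRecOn with
  | nil => simp [endOf, histMax]
  | append_singleton l x ih =>
      rw [endOf_append, histMax_append]
      split
      · omega
      · omega

def myB (h : Hist) : ℕ × ℕ := (endOf h, histMax h + 1)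

lemma myB_valid : ValidBuilder myB := by
  intro h
  constructor
  · exact Nat.lt_succ_of_le (endOf_le h)
  · intro hmem
    rw [List.mem_map] at hmem
    obtain ⟨e, he, hfst⟩ := hmem
    have := le_histMax he
    have : e.1.2 = histMax h + 1 := congrArg Prod.snd hfst
    omega

theorem upper (n k : ℕ) (hn : 2 ≤ n) (hk : 1 ≤ k) :
    BuilderWinsFrom [] (orderedStar k) (SimpleGraph.pathGraph n) (k * (n - 1)) := by
  refine ⟨myB, myB_valid, fun P => ?_⟩
  set h : ℕ → Hist := playFrom [] myB P with hdef
  have hsucc : ∀ t, h (t+1) = h t ++ [((endOf (h t), histMax (h t) + 1), P (h t) (myB (h t)))] :=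
    fun t => rfl
  -- Win predicate
  have key : ∀ t : ℕ,
      (∃ t' ≤ t, HasCopy (orderedStar k) true (h t') ∨
          HasCopy (SimpleGraph.pathGraph n) false (h t')) ∨
      (∃ p r : List ℕ,
        p.Chain' (· < ·) ∧
        p.getLast? = some (endOf (h t)) ∧
        (∀ i (hi : i + 1 < p.length),
          ((p.get ⟨i, Nat.lt_of_succ_lt hi⟩, p.get ⟨i+1, hi⟩), false) ∈ h t) ∧
        r.Chain' (· < ·) ∧
        (∀ w ∈ r, endOf (h t) < w ∧ ((endOf (h t), w), true) ∈ h t) ∧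
        1 ≤ p.length ∧ p.length ≤ n - 1 ∧ r.length ≤ k - 1 ∧
        t ≤ k * (p.length - 1) + r.length) := by
    intro t
    induction t with
    | zero =>
        right
        refine ⟨[endOf (h 0)], [], ?_, ?_, ?_, ?_, ?_, ?_, ?_, ?_, ?_⟩ <;>
          simp [List.Chain'] <;> omega
    | succ t ih =>
        rcases ih with ⟨t', ht', hwin⟩ | ⟨p, r, pchain, plast, pblue, rchain, rred, plen1, plen, rlen, hcount⟩
        · exact Or.inl ⟨t', le_trans ht' (Nat.le_succ t), hwin⟩
        set e := endOf (h t) with he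
        set f := histMax (h t) + 1 with hf
        set b := P (h t) (myB (h t)) with hb
        have hstep : h (t+1) = h t ++ [((e, f), b)] := hsucc t
        have hmemnew : ((e, f), b) ∈ h (t+1) := by rw [hstep]; simp
        have hold : ∀ x ∈ h t, x ∈ h (t+1) := by
          intro x hx; rw [hstep]; exact List.mem_append_left _ hx
        have helf : e < f := Nat.lt_succ_of_le (endOf_le (h t))
        cases hbv : b with
        | true =>
          -- red: extend r
          have hend : endOf (h (t+1)) = e := by rw [hstep, endOf_append, hbv]; rfl
          have hrltf : ∀ w ∈ r, w < f := by
            intro w hw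
            have := (le_histMax (rred w hw).2).2
            simp only at this
            omega
          have rchain' : (r ++ [f]).Chain' (· < ·) := by
            unfold List.Chain'
            rw [List.isChain_append]
            refine ⟨rchain, List.isChain_singleton _, ?_⟩
            intro x hx y hy
            simp only [List.head?_cons, Option.mem_def, Option.some.injEq] at hy
            subst hy
            exact hrltf x (List.mem_of_mem_getLast? hx)
          have rred' : ∀ w ∈ r ++ [f], endOf (h (t+1)) < w ∧ ((endOf (h (t+1)), w), true) ∈ h (t+1) := by
            intro w hw
            rw [hend]
            rcases List.mem_append.mp hw with hw | hw
            · exact ⟨(rred w hw).1, hold _ (rred w hw).2⟩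
            · simp only [List.mem_singleton] at hw
              subst hw
              refine ⟨helf, ?_⟩
              rw [hbv] at hmemnew; exact hmemnew
          by_cases hrk : r.length + 1 ≤ k - 1
          · right
            refine ⟨p, r ++ [f], pchain, by rw [hend]; exact plast, ?_, rchain', rred', plen1, plen, by simpa using hrk, ?_⟩
            · intro i hi; exact hold _ (pblue i hi)
            · simp only [List.length_append, List.length_singleton]
              omega
          · -- r.length + 1 = k : red star win
            left
            refine ⟨t+1, le_refl _, Or.inl ?_⟩
            have hlen : (r ++ [f]).length = k := by
              simp only [List.length_append, List.length_singleton]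
              omega
            refine hasCopy_star (c := e) rchain' hlen ?_ ?_
            · intro w hw
              have := (rred' w hw).1; rwa [hend] at this
            · intro w hw
              have := (rred' w hw).2; rwa [hend] at this
        | false =>
          -- blue: extend p
          have hend : endOf (h (t+1)) = f := by rw [hstep, endOf_append, hbv]; rfl
          have hpne : p ≠ [] := List.ne_nil_of_length_pos (by omega)
          have hlaste : p.getLast hpne = e := by
            have := plast
            rwa [List.getLast?_eq_getLast hpne, Option.some_inj] at this
          have pchain' : (p ++ [f]).Chain' (· < ·) := by
            unfold List.Chain'
            rw [List.isChain_append]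
            refine ⟨pchain, List.isChain_singleton _, ?_⟩
            intro x hx y hy
            simp only [List.head?_cons, Option.mem_def, Option.some.injEq] at hy
            subst hy
            rw [Option.mem_def, plast, Option.some_inj] at hx
            subst hx
            omega
          have pblue' : ∀ i (hi : i + 1 < (p ++ [f]).length),
              (((p ++ [f]).get ⟨i, Nat.lt_of_succ_lt hi⟩, (p ++ [f]).get ⟨i+1, hi⟩), false)
                ∈ h (t+1) := by
            intro i hi
            have hi2 : i + 1 < p.length + 1 := by simpa using hi
            by_cases hip : i + 1 < p.length
            · rw [List.get_eq_getElem, List.get_eq_getElem, List.getElem_append_left (Nat.lt_of_succ_lt hip), List.getElem_append_left hip]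
              exact hold _ (pblue i hip)
            · have hieq : i + 1 = p.length := by omega
              have hi' : i < p.length := by omega
              have g1 : (p ++ [f]).get ⟨i, Nat.lt_of_succ_lt hi⟩ = p.get ⟨i, hi'⟩ :=
                List.getElem_append_left hi'
              have g2 : (p ++ [f]).get ⟨i+1, hi⟩ = f := by
                have : (p ++ [f]).get ⟨i+1, hi⟩ = (p ++ [f]).get ⟨p.length, by simp⟩ := by
                  congr 1
                  exact Fin.ext hieq
                rw [this]
                simp
              rw [g1, g2]
              have : p.get ⟨i, hi'⟩ = e := by
                rw [← hlaste, List.getLast_eq_getElem, List.get_eq_getElem]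
                congr 1
                simp only [Fin.val_mk]
                omega
              rw [this]
              rw [hbv] at hmemnew
              exact hmemnew
          by_cases hpn : p.length + 1 ≤ n - 1
          · right
            refine ⟨p ++ [f], [], pchain', ?_, pblue', List.isChain_nil, by simp, by simp, by simpa using hpn, by simp, ?_⟩
            · rw [hend]; exact List.getLast?_concat
            · simp only [List.length_append, List.length_singleton, List.length_nil]
              obtain ⟨m, hm⟩ : ∃ m, p.length = m + 1 := ⟨p.length - 1, by omega⟩
              rw [hm] at hcount ⊢
              simp only [Nat.add_sub_cancel] at hcount ⊢
              have : k * (m + 1) = k * m + k := Nat.mul_succ k m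
              omega
          · -- p.length + 1 = n : blue path win
            left
            refine ⟨t+1, le_refl _, Or.inr ?_⟩
            have hlen : (p ++ [f]).length = n := by
              simp only [List.length_append, List.length_singleton]
              omega
            exact hasCopy_path pchain' hlen pblue'
  rcases key (k * (n - 1)) with ⟨t', ht', hwin⟩ | ⟨p, r, _, _, _, _, _, plen1, plen, rlen, hcount⟩
  · exact ⟨t', ht', hwin⟩
  · exfalso
    have h1 : p.length - 1 ≤ n - 2 := by omega
    have h2 : k * (p.length - 1) ≤ k * (n - 2) := Nat.mul_le_mul_left k h1
    obtain ⟨m, hm⟩ : ∃ m, n = m + 2 := ⟨n - 2, by omega⟩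
    subst hm
    have h3 : k * (m + 2 - 1) = k * (m + 2 - 2) + k := by
      simp only [Nat.add_sub_cancel]
      exact Nat.mul_succ k m
    omega

-- ===== Painter strategy (lower bound) =====

def redNbrs (h : Hist) (u : ℕ) : Finset ℕ :=
  ((h.filter (fun e => e.1.1 == u && e.2)).map (fun e => e.1.2)).toFinset

lemma mem_redNbrs {h : Hist} {u w : ℕ} : w ∈ redNbrs h u ↔ ((u, w), true) ∈ h := by
  simp only [redNbrs, List.mem_toFinset, List.mem_map, List.mem_filter, Bool.and_eq_true,
    beq_iff_eq]
  constructor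
  · rintro ⟨e, ⟨he, h1, h2⟩, h3⟩
    have : e = ((u, w), true) := by
      obtain ⟨⟨a, b⟩, c⟩ := e
      simp_all
    rwa [this] at he
  · intro hmem
    exact ⟨((u, w), true), ⟨hmem, rfl, rfl⟩, rfl⟩

def myP (k : ℕ) (h : Hist) (uv : ℕ × ℕ) : Bool := decide ((redNbrs h uv.1).card + 2 ≤ k)

lemma redNbrs_mono {h h' : Hist} (hsub : ∀ x ∈ h, x ∈ h') (u : ℕ) :
    redNbrs h u ⊆ redNbrs h' u :=
  fun w hw => mem_redNbrs.mpr (hsub _ (mem_redNbrs.mp hw))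

lemma redNbrs_append_eq {h : Hist} {x : (ℕ × ℕ) × Bool} {u : ℕ}
    (hx : x.2 = false ∨ x.1.1 ≠ u) : redNbrs (h ++ [x]) u = redNbrs h u := by
  ext w
  rw [mem_redNbrs, mem_redNbrs, List.mem_append, List.mem_singleton]
  constructor
  · rintro (hw | hw)
    · exact hw
    · rcases hx with hx | hx
      · rw [← hw] at hx; simp at hx
      · exfalso; apply hx; rw [← hw]
  · exact fun hw => Or.inl hw

lemma redNbrs_append_subset (h : Hist) (x : (ℕ × ℕ) × Bool) (u : ℕ) :
    redNbrs (h ++ [x]) u ⊆ insert x.1.2 (redNbrs h u) := by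
  intro w hw
  rw [mem_redNbrs, List.mem_append, List.mem_singleton] at hw
  rcases hw with hw | hw
  · exact Finset.mem_insert_of_mem (mem_redNbrs.mpr hw)
  · have : w = x.1.2 := by rw [← hw]
    exact this ▸ Finset.mem_insert_self _ _

lemma card_red_le {k : ℕ} (hk : 1 ≤ k) {B : Hist → ℕ × ℕ} (hB : ValidBuilder B) (t : ℕ)
    (u : ℕ) : (redNbrs (playFrom [] B (myP k) t) u).card ≤ k - 1 := by
  induction t with
  | zero => simp [playFrom, redNbrs]
  | succ t ih =>
      set h := playFrom [] B (myP k) t with hh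
      set x : (ℕ × ℕ) × Bool := (B h, myP k h (B h)) with hx
      have hstep : playFrom [] B (myP k) (t+1) = h ++ [x] := rfl
      rw [hstep]
      cases hc : x.2 with
      | false => rw [redNbrs_append_eq (Or.inl hc)]; exact ih
      | true =>
          by_cases hu : x.1.1 = u
          · have hcond : (redNbrs h u).card + 2 ≤ k := by
              have h1 : myP k h (B h) = true := hc
              rw [myP, decide_eq_true_iff] at h1
              rwa [show (B h).1 = u from hu] at h1
            have h2 := Finset.card_le_card (redNbrs_append_subset h x u)
            have h3 := Finset.card_insert_le x.1.2 (redNbrs h u)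
            omega
          · rw [redNbrs_append_eq (Or.inr hu)]; exact ih

lemma blue_red_card {k : ℕ} {B : Hist → ℕ × ℕ} (t : ℕ) {u v : ℕ}
    (hmem : ((u, v), false) ∈ playFrom [] B (myP k) t) :
    k - 1 ≤ (redNbrs (playFrom [] B (myP k) t) u).card := by
  induction t with
  | zero => simp [playFrom] at hmem
  | succ t ih =>
      set h := playFrom [] B (myP k) t with hh
      set x : (ℕ × ℕ) × Bool := (B h, myP k h (B h)) with hx
      have hstep : playFrom [] B (myP k) (t+1) = h ++ [x] := rfl
      rw [hstep] at hmem ⊢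
      have hmono : (redNbrs h u).card ≤ (redNbrs (h ++ [x]) u).card :=
        Finset.card_le_card (redNbrs_mono (fun y hy => List.mem_append_left [x] hy) u)
      rw [List.mem_append, List.mem_singleton] at hmem
      rcases hmem with hmem | hmem
      · have := ih hmem
        omega
      · have hPfalse : myP k h (B h) = false := congrArg Prod.snd hmem.symm
        have hBu : (B h).1 = u := congrArg (fun y => y.1.1) hmem.symm
        rw [myP, decide_eq_false_iff_not] at hPfalse
        rw [hBu] at hPfalse
        omega

lemma no_star {k : ℕ} (hk : 1 ≤ k) {ht : Hist}
    (hcard : ∀ u, (redNbrs ht u).card ≤ k - 1) : ¬ HasCopy (orderedStar k) true ht := by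
  rintro ⟨f, hmono, hedge⟩
  have hsub : (Finset.univ.image f) ⊆ insert (f 0) (redNbrs ht (f 0)) := by
    intro x hx
    rw [Finset.mem_image] at hx
    obtain ⟨j, _, rfl⟩ := hx
    by_cases hj : j = 0
    · subst hj; exact Finset.mem_insert_self _ _
    · refine Finset.mem_insert_of_mem (mem_redNbrs.mpr ?_)
      refine hedge 0 j (Fin.pos_of_ne_zero hj) ?_
      rw [orderedStar, SimpleGraph.fromRel_adj]
      exact ⟨fun h => hj h.symm, Or.inl rfl⟩
  have h1 : (Finset.univ.image f).card = k + 1 := by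
    rw [Finset.card_image_of_injective _ hmono.injective, Finset.card_univ, Fintype.card_fin]
  have h2 := Finset.card_le_card hsub
  have h3 := Finset.card_insert_le (f 0) (redNbrs ht (f 0))
  have h4 := hcard (f 0)
  omega

lemma lower_count {n k : ℕ} (hn : 2 ≤ n) (hk : 1 ≤ k) {B : Hist → ℕ × ℕ}
    (hB : ValidBuilder B) (t : ℕ)
    (hcopy : HasCopy (SimpleGraph.pathGraph n) false (playFrom [] B (myP k) t)) :
    k * (n - 1) ≤ t := by
  set h := playFrom [] B (myP k) t with hdef
  obtain ⟨f, hmono, hedge⟩ := hcopy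
  have hnodup : (h.map Prod.fst).Nodup := nodup_playFrom hB _ t
  have hinj := List.inj_on_of_nodup_map hnodup
  set fv : ℕ → ℕ := fun i => if hi : i < n then f ⟨i, hi⟩ else 0 with hfv
  have efv : ∀ i (hi : i < n), fv i = f ⟨i, hi⟩ := by
    intro i hi
    simp only [hfv]
    exact dif_pos hi
  have hblue : ∀ i, i + 1 < n → ((fv i, fv (i+1)), false) ∈ h := by
    intro i hi
    have h1 : i < n := by omega
    rw [efv i h1, efv (i+1) hi]
    refine hedge ⟨i, h1⟩ ⟨i+1, hi⟩ ?_ ?_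
    · exact Fin.mk_lt_mk.mpr (by omega)
    · rw [SimpleGraph.pathGraph_adj]; left; rfl
  have hred : ∀ i, i + 1 < n → (redNbrs h (fv i)).card = k - 1 := by
    intro i hi
    have hle := card_red_le hk hB t (fv i)
    have hge := blue_red_card t (hblue i hi)
    rw [← hdef] at hle hge
    omega
  set A : ℕ → Finset (ℕ × ℕ) := fun i =>
    insert (fv i, fv (i+1)) ((redNbrs h (fv i)).image (fun w => (fv i, w))) with hA
  have hfst : ∀ i, ∀ x ∈ A i, x.1 = fv i := by
    intro i x hx
    simp only [hA] at hx
    rcases Finset.mem_insert.mp hx with rfl | hx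
    · rfl
    · obtain ⟨w, _, rfl⟩ := Finset.mem_image.mp hx; rfl
  have hmemT : ∀ i, i + 1 < n → ∀ x ∈ A i, x ∈ (h.map Prod.fst).toFinset := by
    intro i hi x hx
    rw [List.mem_toFinset, List.mem_map]
    simp only [hA] at hx
    rcases Finset.mem_insert.mp hx with rfl | hx
    · exact ⟨_, hblue i hi, rfl⟩
    · obtain ⟨w, hw, rfl⟩ := Finset.mem_image.mp hx
      exact ⟨_, mem_redNbrs.mp hw, rfl⟩
  have hsnd_inj : ∀ u : ℕ, Function.Injective (fun w : ℕ => (u, w)) := by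
    intro u a b hab
    simpa using congrArg Prod.snd hab
  have hcardA : ∀ i, i + 1 < n → (A i).card = k := by
    intro i hi
    have hnot : (fv i, fv (i+1)) ∉ (redNbrs h (fv i)).image (fun w => (fv i, w)) := by
      intro hmem
      obtain ⟨w, hw, heq⟩ := Finset.mem_image.mp hmem
      have hw2 : w = fv (i+1) := by simpa using congrArg Prod.snd heq
      subst hw2
      have e1 := mem_redNbrs.mp hw
      have e2 := hblue i hi
      have := hinj e1 e2 rfl
      simp at this
    simp only [hA]
    rw [Finset.card_insert_of_notMem hnot,
      Finset.card_image_of_injective _ (hsnd_inj (fv i)), hred i hi]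
    omega
  have hdisj : ∀ i ∈ Finset.range (n-1), ∀ j ∈ Finset.range (n-1), i ≠ j →
      Disjoint (A i) (A j) := by
    intro i hi j hj hij
    rw [Finset.mem_range] at hi hj
    rw [Finset.disjoint_left]
    intro x hxi hxj
    have h1 := hfst i x hxi
    have h2 := hfst j x hxj
    apply hij
    have hfeq : f ⟨i, by omega⟩ = f ⟨j, by omega⟩ := by
      rw [← efv i (by omega), ← efv j (by omega), ← h1, ← h2]
    have := hmono.injective hfeq
    exact congrArg Fin.val this
  have hcard : ((Finset.range (n-1)).biUnion A).card = (n-1) * k := by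
    rw [Finset.card_biUnion hdisj,
      Finset.sum_congr rfl (fun i hi => hcardA i (by rw [Finset.mem_range] at hi; omega))]
    simp [Finset.sum_const, mul_comm]
  have hsub : (Finset.range (n-1)).biUnion A ⊆ (h.map Prod.fst).toFinset := by
    intro x hx
    obtain ⟨i, hi, hxi⟩ := Finset.mem_biUnion.mp hx
    exact hmemT i (by rw [Finset.mem_range] at hi; omega) x hxi
  have hle := Finset.card_le_card hsub
  have hT : (h.map Prod.fst).toFinset.card = t := by
    rw [List.toFinset_card_of_nodup hnodup, List.length_map, hdef, length_playFrom]
  rw [hcard, hT] at hle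
  calc k * (n - 1) = (n - 1) * k := mul_comm _ _
    _ ≤ t := hle

lemma lower (n k : ℕ) (hn : 2 ≤ n) (hk : 1 ≤ k) (N : ℕ)
    (hwin : BuilderWinsFrom [] (orderedStar k) (SimpleGraph.pathGraph n) N) :
    k * (n - 1) ≤ N := by
  obtain ⟨B, hB, hP⟩ := hwin
  obtain ⟨t, ht, hcase⟩ := hP (myP k)
  rcases hcase with hstar | hpath
  · exact absurd hstar (no_star hk (fun u => card_red_le hk hB t u))
  · calc k * (n - 1) ≤ t := lower_count hn hk hB t hpath
      _ ≤ N := ht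


/-- `r_o(K_{1,k}, P_n) = k (n - 1)` for all `n, k ≥ 1`. -/
theorem stmt_4 (n k : ℕ) (hn : 1 ≤ n) (hk : 1 ≤ k) :
    rOnline (orderedStar k) (SimpleGraph.pathGraph n) = k * (n - 1) := by
  rcases Nat.lt_or_ge n 2 with h2 | h2
  · have hn1 : n = 1 := by omega
    subst hn1
    have h0 : BuilderWinsFrom [] (orderedStar k) (SimpleGraph.pathGraph 1) 0 := by
      refine ⟨myB, myB_valid, fun P => ⟨0, le_refl 0, Or.inr ⟨fun _ => 0, ?_, ?_⟩⟩⟩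
      · intro i j hij
        have h1 : (i : ℕ) < (j : ℕ) := hij
        have h2 : (j : ℕ) < 1 := j.isLt
        omega
      · intro i j hij _
        have h1 : (i : ℕ) < (j : ℕ) := hij
        have h2 : (j : ℕ) < 1 := j.isLt
        omega
    have : rOnline (orderedStar k) (SimpleGraph.pathGraph 1) = 0 :=
      Nat.sInf_eq_zero.mpr (Or.inl h0)
    rw [this]
    simp
  · have hup := upper n k h2 hk
    apply le_antisymm
    · exact Nat.sInf_le hup
    · exact le_csInf ⟨_, hup⟩ (fun N hN => lower n k h2 hk N hN)
end

section
/- For all n ≥ 1, the online ordered Ramsey number r_o(P_3, P_n) is at least 2n - 2. -/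
namespace Stmt5

lemma playFrom_length (h0 B P t) : (playFrom h0 B P t).length = h0.length + t := by
  induction t with
  | zero => simp [playFrom]
  | succ t ih => simp [playFrom, ih]; omega

/-- the greedy painter: colors red iff safe. -/
def greedy (h : Hist) (e : ℕ × ℕ) : Bool :=
  ! h.any (fun p => p.2 && (p.1.2 == e.1 || p.1.1 == e.2))

lemma greedy_true {h : Hist} {e : ℕ × ℕ} (hg : greedy h e = true) :
    ∀ p ∈ h, p.2 = true → p.1.2 ≠ e.1 ∧ p.1.1 ≠ e.2 := by
  intro p hp h2
  simp only [greedy, Bool.not_eq_true', List.any_eq_false] at hg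
  have := hg p hp
  simp [h2] at this
  exact this

lemma greedy_false {h : Hist} {e : ℕ × ℕ} (hg : greedy h e = false) :
    ∃ p ∈ h, p.2 = true ∧ (p.1.2 = e.1 ∨ p.1.1 = e.2) := by
  simp only [greedy, Bool.not_eq_false', List.any_eq_true] at hg
  obtain ⟨p, hp, hc⟩ := hg
  simp only [Bool.and_eq_true, Bool.or_eq_true, beq_iff_eq] at hc
  exact ⟨p, hp, hc.1, hc.2⟩

structure Inv (h : Hist) : Prop where
  lt : ∀ p ∈ h, p.1.1 < p.1.2
  nodup : (h.map Prod.fst).Nodup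
  nored : ∀ a b c : ℕ, ((a, b), true) ∈ h → ((b, c), true) ∈ h → False
  wit : ∀ a b : ℕ, ((a, b), false) ∈ h → ∃ x y, ((x, y), true) ∈ h ∧ (y = a ∨ x = b)

lemma inv_play {B : Hist → ℕ × ℕ} (hB : ValidBuilder B) (t : ℕ) :
    Inv (playFrom [] B greedy t) := by
  induction t with
  | zero => exact ⟨by simp [playFrom], by simp [playFrom], by simp [playFrom],
      by simp [playFrom]⟩
  | succ t ih =>
    set h := playFrom [] B greedy t with hh
    set e := B h with he
    have hev := hB h
    have hlt : e.1 < e.2 := hev.1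
    have hnew : e ∉ h.map Prod.fst := hev.2
    show Inv (h ++ [(e, greedy h e)])
    constructor
    · intro p hp
      rcases List.mem_append.1 hp with hp | hp
      · exact ih.lt p hp
      · simp at hp; subst hp; exact hlt
    · rw [List.map_append]
      simp only [List.map_cons, List.map_nil]
      rw [List.nodup_append]
      refine ⟨ih.nodup, List.nodup_singleton _, ?_⟩
      intro a ha b hb hab
      simp at hb; subst hb; subst hab; exact hnew ha
    · intro a b c hab hbc
      rcases List.mem_append.1 hab with hab | hab <;>
        rcases List.mem_append.1 hbc with hbc | hbc
      · exact ih.nored a b c hab hbc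
      · -- (b,c) is new: e = (b,c), colored red
        simp only [List.mem_singleton, Prod.mk.injEq] at hbc
        obtain ⟨hbce, hcol⟩ := hbc
        have := greedy_true hcol.symm ((a, b), true) hab rfl
        exact this.1 (by rw [← hbce])
      · simp only [List.mem_singleton, Prod.mk.injEq] at hab
        obtain ⟨habe, hcol⟩ := hab
        have := greedy_true hcol.symm ((b, c), true) hbc rfl
        exact this.2 (by rw [← habe])
      · simp only [List.mem_singleton, Prod.mk.injEq] at hab hbc
        have h1 : e.1 = a ∧ e.2 = b := by
          have := hab.1; exact ⟨congrArg Prod.fst this.symm, congrArg Prod.snd this.symm⟩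
        have h2 : e.1 = b ∧ e.2 = c := by
          have := hbc.1; exact ⟨congrArg Prod.fst this.symm, congrArg Prod.snd this.symm⟩
        omega
    · intro a b hab
      rcases List.mem_append.1 hab with hab | hab
      · obtain ⟨x, y, hxy, hor⟩ := ih.wit a b hab
        exact ⟨x, y, List.mem_append.2 (Or.inl hxy), hor⟩
      · simp only [List.mem_singleton, Prod.mk.injEq] at hab
        obtain ⟨habe, hcol⟩ := hab
        obtain ⟨p, hp, hpt, hor⟩ := greedy_false hcol.symm
        refine ⟨p.1.1, p.1.2, List.mem_append.2 (Or.inl ?_), ?_⟩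
        · rwa [show ((p.1.1, p.1.2), true) = p by rw [← hpt]]
        · rcases hor with h1 | h1
          · left; rw [h1, ← habe]
          · right; rw [h1, ← habe]


open Classical in
lemma blue_count {h : Hist} (inv : Inv h) {n : ℕ} (hn : 2 ≤ n)
    (hc : HasCopy (SimpleGraph.pathGraph n) false h) : 2 * n - 2 ≤ h.length := by
  obtain ⟨f, hf, hmem⟩ := hc
  set m := n - 1 with hm
  have hmn : m < n := by omega
  -- total version of f
  set fv : ℕ → ℕ := fun i => if hi : i < n then f ⟨i, hi⟩ else 0 with hfv
  have fveq : ∀ i (hi : i < n), fv i = f ⟨i, hi⟩ := by intro i hi; simp [hfv, hi]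
  have fvmono : ∀ a b, a < b → b ≤ m → fv a < fv b := by
    intro a b hab hbm
    rw [fveq a (by omega), fveq b (by omega)]
    exact hf (by simp [Fin.lt_def]; omega)
  have fvinj : ∀ a b, a ≤ m → b ≤ m → fv a = fv b → a = b := by
    intro a b ha hb hev
    by_contra hne
    rcases Nat.lt_or_ge a b with hl | hl
    · exact absurd hev (Nat.ne_of_lt (fvmono a b hl hb))
    · have hba : b < a := by omega
      exact absurd hev.symm (Nat.ne_of_lt (fvmono b a hba ha))
  have fvlt : ∀ a b, a ≤ m → b ≤ m → fv a < fv b → a < b := by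
    intro a b ha hb hl
    by_contra hc
    rcases Nat.lt_or_ge b a with h' | h'
    · exact Nat.lt_asymm hl (fvmono b a h' ha)
    · have : a = b := by omega
      subst this; exact Nat.lt_irrefl _ hl
  -- blue edges
  have blue : ∀ i, i < m → ((fv i, fv (i + 1)), false) ∈ h := by
    intro i hi
    rw [fveq i (by omega), fveq (i+1) (by omega)]
    refine hmem _ _ (by simp [Fin.lt_def]) ?_
    rw [SimpleGraph.pathGraph_adj]; left; rfl
  -- head / tail predicates
  set Hd : ℕ → Prop := fun v => ∃ x, ((x, v), true) ∈ h with hHd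
  set Tl : ℕ → Prop := fun v => ∃ y, ((v, y), true) ∈ h with hTl
  have disj : ∀ v, Hd v → Tl v → False := by
    rintro v ⟨x, hx⟩ ⟨y, hy⟩; exact inv.nored x v y hx hy
  have wit' : ∀ i, i < m → Hd (fv i) ∨ Tl (fv (i + 1)) := by
    intro i hi
    obtain ⟨x, y, hxy, hor⟩ := inv.wit _ _ (blue i hi)
    rcases hor with rfl | rfl
    · exact Or.inl ⟨x, hxy⟩
    · exact Or.inr ⟨y, hxy⟩
  -- the prefix of heads
  set Q : ℕ → Prop := fun k => ∀ i, i < k → Hd (fv i) with hQ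
  set p := Nat.findGreatest Q m with hp
  have hQ0 : Q 0 := by intro i hi; omega
  have hpm : p ≤ m := Nat.findGreatest_le m
  have hQp : Q p := Nat.findGreatest_spec (Nat.zero_le m) hQ0
  have heads : ∀ i, i < p → Hd (fv i) := hQp
  have tails : ∀ j, p < j → j ≤ m → Tl (fv j) := by
    have base : p < m → Tl (fv (p + 1)) := by
      intro hpm'
      have hnQ : ¬ Q (p + 1) :=
        Nat.findGreatest_is_greatest (k := p + 1) (by rw [← hp]; omega) (by omega)
      have hnHd : ¬ Hd (fv p) := by
        intro hhd
        apply hnQ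
        intro i hi
        rcases Nat.lt_or_ge i p with h' | h'
        · exact heads i h'
        · have : i = p := by omega
          rwa [this]
      rcases wit' p hpm' with h' | h'
      · exact absurd h' hnHd
      · exact h'
    intro j hj hjm
    induction j with
    | zero => omega
    | succ j ihj =>
      rcases Nat.lt_or_ge p j with h' | h'
      · have htj : Tl (fv j) := ihj h' (by omega)
        have hnHd : ¬ Hd (fv j) := fun hh => disj _ hh htj
        rcases wit' j (by omega) with h'' | h''
        · exact absurd h'' hnHd
        · exact h''
      · have hpj : p = j := by omega
        subst hpj
        exact base (by omega)
  -- choose red edges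
  set redE : ℕ → ℕ × ℕ := fun i =>
    if hi : i < p then (Classical.choose (heads i hi), fv i)
    else if hm2 : i < m then (fv (i + 1), Classical.choose (tails (i + 1) (by omega) (by omega)))
    else (0, 0) with hredE
  have redmem : ∀ i, i < m → ((redE i), true) ∈ h := by
    intro i hi
    by_cases h' : i < p
    · simpa [hredE, h'] using Classical.choose_spec (heads i h')
    · simpa [hredE, h', hi] using Classical.choose_spec (tails (i + 1) (by omega) (by omega))
  have redinj : ∀ i ∈ Finset.range m, ∀ j ∈ Finset.range m, redE i = redE j → i = j := by
    intro i hi j hj hij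
    simp only [Finset.mem_range] at hi hj
    by_cases h1 : i < p <;> by_cases h2 : j < p
    · simp only [hredE, dif_pos h1, dif_pos h2, Prod.mk.injEq] at hij
      exact fvinj i j (by omega) (by omega) hij.2
    · exfalso
      have hlt := inv.lt _ (redmem i hi)
      simp only [hredE, dif_pos h1] at hlt
      simp only [hredE, dif_pos h1, dif_neg h2, dif_pos hj, Prod.mk.injEq] at hij
      rw [hij.1] at hlt
      have := fvlt (j + 1) i (by omega) (by omega) hlt
      omega
    · exfalso
      have hlt := inv.lt _ (redmem j hj)
      simp only [hredE, dif_pos h2] at hlt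
      simp only [hredE, dif_neg h1, dif_pos hi, dif_pos h2, Prod.mk.injEq] at hij
      rw [← hij.1] at hlt
      have := fvlt (i + 1) j (by omega) (by omega) hlt
      omega
    · simp only [hredE, dif_neg h1, dif_pos hi, dif_neg h2, dif_pos hj, Prod.mk.injEq] at hij
      have := fvinj (i + 1) (j + 1) (by omega) (by omega) hij.1
      omega
  -- assemble the finset
  set SB : Finset ((ℕ × ℕ) × Bool) :=
    (Finset.range m).image (fun i => ((fv i, fv (i + 1)), false)) with hSB
  set SR : Finset ((ℕ × ℕ) × Bool) :=
    (Finset.range m).image (fun i => (redE i, true)) with hSR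
  have hSBcard : SB.card = m := by
    rw [hSB, Finset.card_image_of_injOn, Finset.card_range]
    intro i hi j hj hij
    simp only [Finset.coe_range, Set.mem_Iio] at hi hj
    simp only [Prod.mk.injEq] at hij
    exact fvinj i j (by omega) (by omega) hij.1.1
  have hSRcard : SR.card = m := by
    rw [hSR, Finset.card_image_of_injOn, Finset.card_range]
    intro i hi j hj hij
    simp only [Finset.coe_range, Set.mem_Iio] at hi hj
    simp only [Prod.mk.injEq] at hij
    exact redinj i (Finset.mem_range.2 hi) j (Finset.mem_range.2 hj) hij.1
  have hdisj : Disjoint SB SR := by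
    rw [Finset.disjoint_left]
    intro a haB haR
    simp only [hSB, hSR, Finset.mem_image] at haB haR
    obtain ⟨i, _, hi⟩ := haB
    obtain ⟨j, _, hj⟩ := haR
    rw [← hi] at hj
    simpa using congrArg Prod.snd hj
  have hsub : SB ∪ SR ⊆ h.toFinset := by
    intro a ha
    rw [List.mem_toFinset]
    rcases Finset.mem_union.1 ha with ha | ha <;>
      simp only [hSB, hSR, Finset.mem_image, Finset.mem_range] at ha <;>
      obtain ⟨i, hi, rfl⟩ := ha
    · exact blue i hi
    · exact redmem i hi
  have hcard : 2 * m ≤ (SB ∪ SR).card := by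
    rw [Finset.card_union_of_disjoint hdisj, hSBcard, hSRcard]; omega
  have : (SB ∪ SR).card ≤ h.toFinset.card := Finset.card_le_card hsub
  have htf : h.toFinset.card ≤ h.length := h.toFinset_card_le
  omega


/-- all ordered pairs `(u,v)` with `u < v < M`. -/
def allPairs (M : ℕ) : List (ℕ × ℕ) :=
  (((List.range M).product (List.range M)).filter (fun p => p.1 < p.2))

lemma mem_allPairs {M : ℕ} {p : ℕ × ℕ} :
    p ∈ allPairs M ↔ p.1 < p.2 ∧ p.2 < M := by
  constructor
  · intro hp
    rw [allPairs, List.mem_filter] at hp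
    have h1 := hp.1
    rw [List.pair_mem_product] at h1
    simp only [List.mem_range] at h1
    exact ⟨by simpa using hp.2, h1.2⟩
  · intro ⟨h1, h2⟩
    rw [allPairs, List.mem_filter]
    constructor
    · rw [List.pair_mem_product]
      simp only [List.mem_range]
      exact ⟨by omega, h2⟩
    · simpa using h1

lemma allPairs_nodup (M : ℕ) : (allPairs M).Nodup :=
  (List.Nodup.product (List.nodup_range (n := M)) (List.nodup_range (n := M))).filter _

def maxCoord (h : Hist) : ℕ :=
  h.foldr (fun p a => max (max p.1.1 p.1.2) a) 0

lemma le_maxCoord {h : Hist} {p : (ℕ × ℕ) × Bool} (hp : p ∈ h) :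
    p.1.1 ≤ maxCoord h ∧ p.1.2 ≤ maxCoord h := by
  induction h with
  | nil => cases hp
  | cons q t ih =>
    rcases List.mem_cons.1 hp with rfl | hp
    · simp only [maxCoord, List.foldr]; omega
    · have := ih hp
      simp only [maxCoord, List.foldr] at this ⊢
      omega

/-- the Builder who just plays all edges of `K_M` in order. -/
def KB (M : ℕ) : Hist → ℕ × ℕ := fun h =>
  if hc : h.length < (allPairs M).length ∧ h.map Prod.fst = (allPairs M).take h.length then
    (allPairs M)[h.length]'hc.1
  else (maxCoord h + 1, maxCoord h + 2)

lemma KB_valid (M : ℕ) : ValidBuilder (KB M) := by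
  intro h
  rw [KB]
  by_cases hc : h.length < (allPairs M).length ∧ h.map Prod.fst = (allPairs M).take h.length
  · rw [dif_pos hc]
    have hmem : (allPairs M)[h.length]'hc.1 ∈ allPairs M := List.getElem_mem _
    refine ⟨(mem_allPairs.1 hmem).1, ?_⟩
    rw [hc.2]
    intro hmemtake
    rw [List.mem_take_iff_getElem] at hmemtake
    obtain ⟨i, hi, hie⟩ := hmemtake
    have hilen : i < h.length := by
      simp only [lt_min_iff] at hi; exact hi.1
    have : i = h.length := ((allPairs_nodup M).getElem_inj_iff).1 hie
    omega
  · rw [dif_neg hc]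
    refine ⟨by omega, ?_⟩
    intro hmem
    rw [List.mem_map] at hmem
    obtain ⟨p, hp, hpe⟩ := hmem
    have := (le_maxCoord hp).1
    rw [hpe] at this
    simp at this




lemma KB_play (M : ℕ) (P : Hist → ℕ × ℕ → Bool) (t : ℕ) (ht : t ≤ (allPairs M).length) :
    (playFrom [] (KB M) P t).map Prod.fst = (allPairs M).take t := by
  induction t with
  | zero => simp [playFrom]
  | succ t ih =>
    have ht' : t ≤ (allPairs M).length := by omega
    have ih' := ih ht'
    have hlen : (playFrom [] (KB M) P t).length = t := by
      have := playFrom_length [] (KB M) P t; simpa using this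
    show ((playFrom [] (KB M) P t) ++ [_]).map Prod.fst = _
    rw [List.map_append]
    rw [ih']
    have hcond : (playFrom [] (KB M) P t).length < (allPairs M).length ∧
        (playFrom [] (KB M) P t).map Prod.fst =
          (allPairs M).take (playFrom [] (KB M) P t).length := by
      rw [hlen]; exact ⟨by omega, ih'⟩
    simp only [List.map_cons, List.map_nil]
    rw [KB, dif_pos hcond]
    have : (allPairs M)[(playFrom [] (KB M) P t).length]'hcond.1 =
        (allPairs M)[t]'(by omega) := by
      congr 1
    rw [this]
    exact List.take_concat_get' _ _ (by omega)

open Classical in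
lemma KB_wins (n : ℕ) (hn : 1 ≤ n) :
    BuilderWinsFrom [] (SimpleGraph.pathGraph 3) (SimpleGraph.pathGraph n)
      ((allPairs (2 * n)).length) := by
  set M := 2 * n with hM
  set E := (allPairs M).length with hE
  refine ⟨KB M, KB_valid M, fun P => ⟨E, le_refl E, ?_⟩⟩
  set h := playFrom [] (KB M) P E with hh
  have hmap : h.map Prod.fst = allPairs M := by
    rw [hh, KB_play M P E (le_refl E), List.take_length]
  have hlt : ∀ p ∈ h, p.1.1 < p.1.2 := by
    intro p hp
    have : p.1 ∈ allPairs M := by rw [← hmap]; exact List.mem_map_of_mem hp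
    exact (mem_allPairs.1 this).1
  have cover : ∀ u v, u < v → v < M → ∃ c, ((u, v), c) ∈ h := by
    intro u v huv hvM
    have : (u, v) ∈ h.map Prod.fst := by rw [hmap]; exact mem_allPairs.2 ⟨huv, hvM⟩
    rw [List.mem_map] at this
    obtain ⟨p, hp, hpe⟩ := this
    exact ⟨p.2, by rwa [show ((u,v), p.2) = p from by rw [← hpe]]⟩
  by_cases H : ∃ a b c : ℕ, ((a, b), true) ∈ h ∧ ((b, c), true) ∈ h
  · left
    obtain ⟨a, b, c, hab, hbc⟩ := H
    have h1 : a < b := hlt _ hab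
    have h2 : b < c := hlt _ hbc
    refine ⟨fun i => if i.val = 0 then a else if i.val = 1 then b else c, ?_, ?_⟩
    · intro i j hij
      rcases i with ⟨iv, hiv⟩; rcases j with ⟨jv, hjv⟩
      simp only [Fin.lt_def] at hij
      simp only []
      interval_cases iv <;> interval_cases jv <;> simp <;> omega
    · intro i j hij hadj
      rw [SimpleGraph.pathGraph_adj] at hadj
      rcases i with ⟨iv, hiv⟩; rcases j with ⟨jv, hjv⟩
      simp only [Fin.lt_def] at hij
      simp only [] at hadj ⊢
      interval_cases iv <;> interval_cases jv <;> simp_all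
  · right
    set Tl : ℕ → Prop := fun v => ∃ w, ((v, w), true) ∈ h with hTl
    set A := (Finset.range M).filter (fun v => Tl v) with hA
    set Bs := (Finset.range M).filter (fun v => ¬ Tl v) with hB
    have hcards : A.card + Bs.card = M := by
      rw [hA, hB, Finset.card_filter_add_card_filter_not, Finset.card_range]
    have hone : n ≤ A.card ∨ n ≤ Bs.card := by omega
    have key : ∀ s : Finset ℕ, (s = A ∨ s = Bs) → ∀ u ∈ s, ∀ v ∈ s, u < v →
        ((u, v), false) ∈ h := by
      intro s hs u hu v hv huv
      have hmemr : ∀ x ∈ s, x < M := by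
        intro x hx
        rcases hs with rfl | rfl <;>
          · rw [Finset.mem_filter, Finset.mem_range] at hx; exact hx.1
      obtain ⟨c, hc⟩ := cover u v huv (hmemr v hv)
      cases c with
      | false => exact hc
      | true =>
        exfalso
        rcases hs with rfl | rfl
        · have : Tl v := by
            rw [hA, Finset.mem_filter] at hv; exact hv.2
          obtain ⟨w, hw⟩ := this
          exact H ⟨u, v, w, hc, hw⟩
        · have : ¬ Tl u := by
            rw [hB, Finset.mem_filter] at hu; exact hu.2
          exact this ⟨v, hc⟩
    have main : ∀ s : Finset ℕ, (s = A ∨ s = Bs) → n ≤ s.card →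
        HasCopy (SimpleGraph.pathGraph n) false h := by
      intro s hs hcard
      obtain ⟨t, hts, htc⟩ := Finset.exists_subset_card_eq hcard
      set f := t.orderEmbOfFin htc with hf
      refine ⟨f, f.strictMono, ?_⟩
      intro i j hij _
      have hi : (f i : ℕ) ∈ s := hts (t.orderEmbOfFin_mem htc i)
      have hj : (f j : ℕ) ∈ s := hts (t.orderEmbOfFin_mem htc j)
      exact key s hs _ hi _ hj (f.strictMono hij)
    rcases hone with h1 | h1
    · exact main A (Or.inl rfl) h1
    · exact main Bs (Or.inr rfl) h1




lemma no_red_copy {h : Hist} (inv : Inv h) :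
    ¬ HasCopy (SimpleGraph.pathGraph 3) true h := by
  rintro ⟨f, hf, hmem⟩
  have h01 := hmem 0 1 (by decide) (by rw [SimpleGraph.pathGraph_adj]; decide)
  have h12 := hmem 1 2 (by decide) (by rw [SimpleGraph.pathGraph_adj]; decide)
  exact inv.nored _ _ _ h01 h12

end Stmt5

/-- `r_o(P_3, P_n) ≥ 2n - 2` for all `n ≥ 1`. -/
theorem stmt_5 (n : ℕ) (hn : 1 ≤ n) :
    2 * n - 2 ≤ rOnline (SimpleGraph.pathGraph 3) (SimpleGraph.pathGraph n) := by
  refine le_csInf ⟨(Stmt5.allPairs (2 * n)).length, Stmt5.KB_wins n hn⟩ ?_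
  rintro N ⟨B, hB, hw⟩
  obtain ⟨t, htN, hwin⟩ := hw Stmt5.greedy
  have inv := Stmt5.inv_play hB t
  rcases hwin with hred | hblue
  · exact absurd hred (Stmt5.no_red_copy inv)
  · rcases Nat.lt_or_ge n 2 with h2 | h2
    · omega
    · have hcount := Stmt5.blue_count inv h2 hblue
      have hlen := Stmt5.playFrom_length [] B Stmt5.greedy t
      simp only [List.length_nil, Nat.zero_add] at hlen
      omega
end

section
/- For all n ≥ 1, the online ordered Ramsey number r_o(X, P_n) is at most (5/3)n + 10, where X is the intersecting matching. -/
/-- The intersecting matching `X`: vertices `a < b < c < d` with edges `ac` and `bd`. -/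
def interMatching : SimpleGraph (Fin 4) :=
  SimpleGraph.fromRel (fun i j => ((i : ℕ) = 0 ∧ (j : ℕ) = 2) ∨ ((i : ℕ) = 1 ∧ (j : ℕ) = 3))

namespace OnlineRamsey

/-- The winning condition for Builder. -/
def Done (n : ℕ) (h : Hist) : Prop :=
  HasCopy interMatching true h ∨ HasCopy (SimpleGraph.pathGraph n) false h

/-- Builder can force a win within `N` further rounds. -/
inductive W (n : ℕ) : ℕ → Hist → Prop
  | done {N : ℕ} {h : Hist} : Done n h → W n N h
  | step {N : ℕ} {h : Hist} (e : ℕ × ℕ) (h₁ : e.1 < e.2) (h₂ : e ∉ h.map Prod.fst)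
      (next : ∀ c : Bool, W n N (h ++ [(e, c)])) : W n (N + 1) h

theorem W.mono {n N h} (hw : W n N h) : ∀ {M}, N ≤ M → W n M h := by
  induction hw with
  | done hd => exact fun _ => W.done hd
  | step e h₁ h₂ next ih =>
    intro M hM
    obtain ⟨M', rfl⟩ : ∃ M', M = M' + 1 := ⟨M - 1, by omega⟩
    exact W.step e h₁ h₂ fun c => ih c (by omega)

theorem W_zero_done {n h} (hw : W n 0 h) : Done n h := by
  cases hw with
  | done hd => exact hd

/-- A fresh fallback edge. -/
def fallback (h : Hist) : ℕ × ℕ :=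
  ((h.map fun x => max x.1.1 x.1.2).foldr max 0 + 1,
   (h.map fun x => max x.1.1 x.1.2).foldr max 0 + 2)

theorem le_foldr_max (l : List ℕ) : ∀ x ∈ l, x ≤ l.foldr max 0 := by
  induction l with
  | nil => simp
  | cons a l ih =>
    intro x hx
    simp only [List.foldr_cons]
    rcases List.mem_cons.1 hx with rfl | h
    · exact le_max_left _ _
    · exact le_trans (ih x h) (le_max_right _ _)

theorem fallback_valid (h : Hist) : (fallback h).1 < (fallback h).2 ∧ fallback h ∉ h.map Prod.fst := by
  constructor
  · simp [fallback]
  · intro hmem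
    have : (fallback h).1 ≤ (h.map fun x => max x.1.1 x.1.2).foldr max 0 := by
      simp only [List.mem_map] at hmem
      obtain ⟨x, hx, hx2⟩ := hmem
      have : max x.1.1 x.1.2 ∈ h.map fun x => max x.1.1 x.1.2 := List.mem_map_of_mem hx
      have h2 := le_foldr_max _ _ this
      have : (fallback h).1 = x.1.1 := by rw [← hx2]
      omega
    simp [fallback] at this

noncomputable def rank (n : ℕ) (h : Hist) : ℕ := sInf {N | W n N h}

open scoped Classical in
noncomputable def Bstrat (n : ℕ) : Hist → ℕ × ℕ := fun h =>
  if hc : ∃ e : ℕ × ℕ, (e.1 < e.2 ∧ e ∉ h.map Prod.fst) ∧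
      ∀ c : Bool, W n (rank n h - 1) (h ++ [(e, c)]) then hc.choose else fallback h

theorem Bstrat_valid (n : ℕ) : ValidBuilder (Bstrat n) := by
  intro h
  unfold Bstrat
  split
  · next hc => exact hc.choose_spec.1
  · exact fallback_valid h

theorem rank_spec {n h} (hw : ∃ N, W n N h) : W n (rank n h) h := Nat.sInf_mem hw

theorem rank_le {n N h} (hw : W n N h) : rank n h ≤ N := Nat.sInf_le hw

theorem descent {n h N} (hw : W n N h) (hnd : ¬ Done n h) :
    1 ≤ rank n h ∧ ∀ c : Bool, W n (rank n h - 1) (h ++ [(Bstrat n h, c)]) := by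
  have hr : W n (rank n h) h := rank_spec ⟨N, hw⟩
  generalize hrk : rank n h = R at hr
  cases hr with
  | done hd => exact absurd hd hnd
  | step e h₁ h₂ next =>
    next N' =>
    have hrank : rank n h = N' + 1 := hrk
    have hc : ∃ e : ℕ × ℕ, (e.1 < e.2 ∧ e ∉ h.map Prod.fst) ∧
        ∀ c : Bool, W n (rank n h - 1) (h ++ [(e, c)]) := by
      refine ⟨e, ⟨h₁, h₂⟩, fun c => ?_⟩
      have heq : rank n h - 1 = N' := by rw [hrank]; omega
      rw [heq]; exact next c
    refine ⟨by omega, ?_⟩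
    intro c
    unfold Bstrat
    rw [dif_pos hc]
    exact (hc.choose_spec.2 c).mono (by omega)

theorem extraction {n N : ℕ} (hw : W n N []) :
    BuilderWinsFrom [] interMatching (SimpleGraph.pathGraph n) N := by
  refine ⟨Bstrat n, Bstrat_valid n, fun P => ?_⟩
  set B := Bstrat n
  by_contra hno
  push_neg at hno
  -- show by induction : ∀ t ≤ N, W n (N - t) (playFrom [] B P t)
  have key : ∀ t, t ≤ N → W n (N - t) (playFrom [] B P t) := by
    intro t
    induction t with
    | zero => intro _; simpa [playFrom] using hw
    | succ t ih =>
      intro ht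
      have hWt := ih (by omega)
      have hnd : ¬ Done n (playFrom [] B P t) := by
        intro hd
        rcases hd with hd | hd
        · exact (hno t (by omega)).1 hd
        · exact (hno t (by omega)).2 hd
      obtain ⟨h1, h2⟩ := descent hWt hnd
      have hrle : rank n (playFrom [] B P t) ≤ N - t := rank_le hWt
      have := h2 (P (playFrom [] B P t) (B (playFrom [] B P t)))
      have heq : playFrom [] B P (t+1) =
          playFrom [] B P t ++ [(B (playFrom [] B P t), P (playFrom [] B P t) (B (playFrom [] B P t)))] := rfl
      rw [heq]
      exact this.mono (by omega)
  have hend := key N le_rfl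
  simp only [Nat.sub_self] at hend
  rcases W_zero_done hend with hd | hd
  · exact (hno N le_rfl).1 hd
  · exact (hno N le_rfl).2 hd

end OnlineRamsey

namespace OnlineRamsey

/-- `a` and `b` cross: a.1 < b.1 < a.2 < b.2. -/
def Crossing (a b : ℕ × ℕ) : Prop := a.1 < b.1 ∧ b.1 < a.2 ∧ a.2 < b.2

theorem xcopy {h : Hist} {a b : ℕ × ℕ} (ha : (a, true) ∈ h) (hb : (b, true) ∈ h)
    (hc : Crossing a b) : HasCopy interMatching true h := by
  obtain ⟨h1, h2, h3⟩ := hc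
  refine ⟨![a.1, b.1, a.2, b.2], ?_, ?_⟩
  · intro i j hij
    fin_cases i <;> fin_cases j <;>
      simp_all [Fin.lt_def] <;> omega
  · have hchar : ∀ i j : Fin 4, i < j → interMatching.Adj i j →
        ((i : ℕ) = 0 ∧ (j : ℕ) = 2) ∨ ((i : ℕ) = 1 ∧ (j : ℕ) = 3) := by
      intro i j hij hadj
      rw [interMatching, SimpleGraph.fromRel_adj] at hadj
      have hij' : (i : ℕ) < (j : ℕ) := hij
      rcases hadj.2 with (hx | hx) | (hx | hx) <;> omega
    intro i j hij hadj
    rcases hchar i j hij hadj with ⟨h0, h2⟩ | ⟨h1', h3'⟩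
    · have hi : i = (0 : Fin 4) := Fin.ext (by simpa using h0)
      have hj : j = (2 : Fin 4) := Fin.ext (by simpa using h2)
      subst hi; subst hj
      simpa using ha
    · have hi : i = (1 : Fin 4) := Fin.ext (by simpa using h1')
      have hj : j = (3 : Fin 4) := Fin.ext (by simpa using h3')
      subst hi; subst hj
      simpa using hb

theorem wforced {n K : ℕ} {h : Hist} (e r : ℕ × ℕ) (hr : (r, true) ∈ h)
    (hcr : Crossing e r ∨ Crossing r e) (h12 : e.1 < e.2) (hnew : e ∉ h.map Prod.fst)
    (next : W n K (h ++ [(e, false)])) : W n (K + 1) h := by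
  refine W.step e h12 hnew fun c => ?_
  cases c
  · exact next
  · refine W.done (Or.inl ?_)
    have he : (e, true) ∈ h ++ [(e, true)] := by simp
    have hr' : (r, true) ∈ h ++ [(e, true)] := List.mem_append_left _ hr
    rcases hcr with hcr | hcr
    · exact xcopy he hr' hcr
    · exact xcopy hr' he hcr

/-- Blue edge relation: `a < b` and blue edge `(a,b)` recorded. -/
def Rel (h : Hist) (a b : ℕ) : Prop := a < b ∧ ((a, b), false) ∈ h

theorem Rel.mono {h h' : Hist} {a b : ℕ} (hr : Rel h a b) (hh : ∀ x ∈ h, x ∈ h') : Rel h' a b :=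
  ⟨hr.1, hh _ hr.2⟩

theorem chain_mono {h h' : Hist} {l : List ℕ} (hc : l.Chain' (Rel h))
    (hh : ∀ x ∈ h, x ∈ h') : l.Chain' (Rel h') :=
  List.IsChain.imp (fun _ _ hr => hr.mono hh) hc

theorem pathcopy {h : Hist} {l : List ℕ} {n : ℕ} (hc : l.Chain' (Rel h))
    (hn : n ≤ l.length) : HasCopy (SimpleGraph.pathGraph n) false h := by
  refine ⟨fun i => l.get ⟨i, lt_of_lt_of_le i.2 hn⟩, ?_, ?_⟩
  · intro i j hij
    have hpl : l.Pairwise (· < ·) := by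
      haveI : IsTrans ℕ (· < ·) := ⟨fun _ _ _ => lt_trans⟩
      exact List.isChain_iff_pairwise.1 (List.IsChain.imp (fun a b hab => hab.1) hc)
    exact List.pairwise_iff_get.1 hpl _ _ (by exact hij)
  · intro i j hij hadj
    rw [SimpleGraph.pathGraph_adj] at hadj
    have hij' : (i : ℕ) < (j : ℕ) := hij
    have hj : (j : ℕ) = (i : ℕ) + 1 := by omega
    have hget := List.isChain_iff_getElem.1 hc (i : ℕ) (by omega)
    have h2 := hget.2
    have heq : (fun i : Fin n => l.get ⟨(i : ℕ), lt_of_lt_of_le i.2 hn⟩) j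
        = l.get ⟨(i : ℕ) + 1, by omega⟩ := by
      simp only [hj]
    rw [heq]
    exact h2

theorem div3_superadd (a b : ℕ) : a / 3 + b / 3 ≤ (a + b) / 3 := by
  rw [Nat.le_div_iff_mul_le (by norm_num)]
  have h1 := Nat.div_mul_le_self a 3
  have h2 := Nat.div_mul_le_self b 3
  omega

end OnlineRamsey

namespace OnlineRamsey

theorem not_mem_push {e f : ℕ × ℕ} {c : Bool} {h : Hist}
    (h1 : e ∉ h.map Prod.fst) (h2 : e ≠ f) : e ∉ (h ++ [(f, c)]).map Prod.fst := by
  simp only [List.map_append, List.map_cons, List.map_nil, List.mem_append, List.mem_cons,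
    List.not_mem_nil, or_false]
  rintro (hm | hm)
  · exact h1 hm
  · exact h2 hm

theorem mem_push {x : (ℕ × ℕ) × Bool} {h : Hist} (y : (ℕ × ℕ) × Bool)
    (hx : x ∈ h) : x ∈ h ++ [y] := List.mem_append_left _ hx

/-- The cap gadget: given a red "cap" `(x,b)` with the path end `e₀` below `x` and
a blue chain starting `b :: c₁ :: ...` above, Builder plays the bait `(x+2, x+4)` inside the
cap span and harvests. -/
theorem capL {n : ℕ} {h : Hist} {e₀ x b c₁ : ℕ} {K : ℕ}
    (hcap : ((x, b), true) ∈ h)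
    (he₀x : e₀ < x) (hxb : x + 5 ≤ b) (hbc : b < c₁)
    (hmid : ∀ p ∈ h.map Prod.fst, (p.1 ≤ x ∨ b ≤ p.1) ∧ (p.2 ≤ x ∨ b ≤ p.2))
    (hK : 4 ≤ K)
    (CB : W n (K - 3)
      (((h ++ [((x+2, x+4), false)]) ++ [((e₀, x+2), false)]) ++ [((x+4, c₁), false)]))
    (CR : W n (K - 4)
      ((((h ++ [((x+2, x+4), true)]) ++ [((e₀, x+1), false)]) ++ [((x+1, x+3), false)])
        ++ [((x+3, b), false)])) :
    W n K h := by
  have hfr : ∀ u v : ℕ, ((x < u ∧ u < b) ∨ (x < v ∧ v < b)) → (u, v) ∉ h.map Prod.fst := by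
    intro u v hor hmem
    have := hmid _ hmem
    rcases hor with h' | h' <;> simp at this <;> omega
  have hstep : W n (K - 1 + 1) h := by
    refine W.step (x+2, x+4) (by omega) (hfr _ _ (by omega)) fun c => ?_
    cases c
    · -- bait blue
      have s1 : W n (K - 3 + 1)
          ((h ++ [((x+2, x+4), false)]) ++ [((e₀, x+2), false)]) := by
        refine wforced (x+4, c₁) (x, b) (mem_push _ (mem_push _ hcap))
          (Or.inr ⟨by omega, by omega, by omega⟩) (by omega) ?_ CB
        refine not_mem_push (not_mem_push (hfr _ _ (by omega)) ?_) ?_ <;>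
          (simp; try omega)
      have s2 : W n (K - 3 + 1 + 1) (h ++ [((x+2, x+4), false)]) := by
        refine wforced (e₀, x+2) (x, b) (mem_push _ hcap)
          (Or.inl ⟨by omega, by omega, by omega⟩) (by omega) ?_ s1
        refine not_mem_push (hfr _ _ (by omega)) ?_
        simp; try omega
      exact s2.mono (by omega)
    · -- bait red
      have s1 : W n (K - 4 + 1)
          (((h ++ [((x+2, x+4), true)]) ++ [((e₀, x+1), false)]) ++ [((x+1, x+3), false)]) := by
        refine wforced (x+3, b) (x+2, x+4)
          (mem_push _ (mem_push _ (by simp))) (Or.inr ⟨by omega, by omega, by omega⟩)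
          (by omega) ?_ CR
        refine not_mem_push (not_mem_push (not_mem_push (hfr _ _ (by omega)) ?_) ?_) ?_ <;>
          (simp; try omega)
      have s2 : W n (K - 4 + 1 + 1)
          ((h ++ [((x+2, x+4), true)]) ++ [((e₀, x+1), false)]) := by
        refine wforced (x+1, x+3) (x+2, x+4) (mem_push _ (by simp))
          (Or.inl ⟨by omega, by omega, by omega⟩) (by omega) ?_ s1
        refine not_mem_push (not_mem_push (hfr _ _ (by omega)) ?_) ?_ <;>
          (simp; try omega)
      have s3 : W n (K - 4 + 1 + 1 + 1) (h ++ [((x+2, x+4), true)]) := by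
        refine wforced (e₀, x+1) (x, b) (mem_push _ hcap)
          (Or.inl ⟨by omega, by omega, by omega⟩) (by omega) ?_ s2
        refine not_mem_push (hfr _ _ (by omega)) ?_
        simp; try omega
      exact s3.mono (by omega)
  exact hstep.mono (by omega)

end OnlineRamsey

namespace OnlineRamsey

theorem chain_ext {h h' : Hist} {l : List ℕ} {e₀ a : ℕ} {L : List ℕ}
    (hch : l.Chain' (Rel h)) (hlast : l.getLast? = some e₀) (hsub : ∀ x ∈ h, x ∈ h')
    (hL : (a :: L).Chain' (Rel h')) (hrel : Rel h' e₀ a) :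
    (l ++ (a :: L)).Chain' (Rel h') := by
  refine (chain_mono hch hsub).append hL ?_
  intro x hx y hy
  rw [hlast] at hx
  simp only [Option.mem_def, Option.some.injEq] at hx
  simp only [List.head?_cons, Option.mem_def, Option.some.injEq] at hy
  subst hx; subst hy
  exact hrel

/-- The statement of the main induction, as a definition for reuse. -/
def IHtype (n m : ℕ) : Prop :=
  ∀ (h : Hist) (V : ℕ) (l : List ℕ) (e₀ : ℕ),
    l.Chain' (Rel h) → l.getLast? = some e₀ → 2 ≤ l.length →
    (∀ v ∈ l, v < V) → (∀ p ∈ h.map Prod.fst, p.1 < V ∧ p.2 < V) →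
    n ≤ l.length + m → W n (5 * m / 3 + 9) h

theorem leafStep {n m : ℕ} (IH : ∀ m' , m' < m → IHtype n m')
    {h' : Hist} {V' : ℕ} {l' : List ℕ} {e₀' : ℕ} {K e : ℕ}
    (hch : l'.Chain' (Rel h')) (hlast : l'.getLast? = some e₀') (hlen2 : 2 ≤ l'.length)
    (hmem : ∀ v ∈ l', v < V') (hedge : ∀ p ∈ h'.map Prod.fst, p.1 < V' ∧ p.2 < V')
    (hgrow : n ≤ l'.length + (m - e)) (he : 1 ≤ e)
    (hK : e < m → 5 * (m - e) / 3 + 9 ≤ K) : W n K h' := by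
  by_cases hd : n ≤ l'.length
  · exact W.done (Or.inr (pathcopy hch hd))
  · have he' : e < m := by omega
    exact (IH (m - e) (by omega) h' V' l' e₀' hch hlast hlen2 hmem hedge hgrow).mono (hK he')

/-- The cap gadget branch: after Painter reds the growth probe `(x, b)` at the bottom of
the blue chain `b :: c₁ :: L`, Builder wins the block with the bait play. -/
theorem capBranch {n m j : ℕ} (hm : 1 ≤ m)
    (IH : ∀ m', m' < m → IHtype n m')
    {H : Hist} {V : ℕ} {l : List ℕ} {e₀ x b c₁ s : ℕ} {L : List ℕ}
    (hch : l.Chain' (Rel H)) (hlast : l.getLast? = some e₀) (hlen2 : 2 ≤ l.length)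
    (hmeml : ∀ v ∈ l, v < V)
    (hedgeH : ∀ p ∈ H.map Prod.fst, p.1 < V + 20000 ∧ p.2 < V + 20000)
    (hcap : ((x, b), true) ∈ H)
    (hchain : (b :: c₁ :: L).Chain' (Rel H))
    (hlastc : (c₁ :: L).getLast? = some s)
    (hmemc : ∀ v ∈ b :: c₁ :: L, v < V + 20000)
    (he₀x : e₀ < x) (hxb : x + 5 ≤ b) (hbc : b < c₁) (hxV : V ≤ x) (hxV2 : x + 5 < V + 20000)
    (hmid : ∀ p ∈ H.map Prod.fst, (p.1 ≤ x ∨ b ≤ p.1) ∧ (p.2 ≤ x ∨ b ≤ p.2))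
    (hLlen : L.length + 1 = j) (hj4 : j ≤ 4)
    (hgrow : n ≤ l.length + m) :
    W n (5 * m / 3 + (8 - j)) H := by
  have he₀V : e₀ < V := hmeml _ (List.mem_of_getLast? hlast)
  refine capL hcap he₀x hxb hbc hmid (by omega) ?_ ?_
  · -- bait blue leaf
    set h' := ((H ++ [((x+2, x+4), false)]) ++ [((e₀, x+2), false)]) ++ [((x+4, c₁), false)]
      with hh'
    have hsub : ∀ y ∈ H, y ∈ h' := by intro y hy; simp [hh', hy]
    have hbait : ((x+2, x+4), false) ∈ h' := by simp [hh']
    have hj1 : ((e₀, x+2), false) ∈ h' := by simp [hh']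
    have hj2 : ((x+4, c₁), false) ∈ h' := by simp [hh']
    have hL : ((x+2) :: (x+4) :: c₁ :: L).Chain' (Rel h') := by
      refine List.isChain_cons_cons.2 ⟨⟨by omega, hbait⟩, ?_⟩
      refine List.isChain_cons_cons.2 ⟨⟨by omega, hj2⟩, ?_⟩
      exact chain_mono hchain.tail hsub
    have hchainout := chain_ext hch hlast hsub hL ⟨by omega, hj1⟩
    have hlastout : (l ++ ((x+2) :: (x+4) :: c₁ :: L)).getLast? = some s := by
      rw [List.getLast?_append]
      simp only [List.getLast?_cons_cons, hlastc, Option.or_some, Option.some_or]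
    refine (leafStep (e := j + 2) (K := 5 * m / 3 + (5 - j)) (V' := V + 20000) IH hchainout hlastout
      (by simp; omega) ?_ ?_ ?_ (by omega) ?_).mono (by omega)
    · intro v hv
      rcases List.mem_append.1 hv with hv | hv
      · exact lt_of_lt_of_le (hmeml v hv) (by omega)
      · simp only [List.mem_cons] at hv
        rcases hv with rfl | rfl | rfl | hv
        · omega
        · omega
        · exact hmemc _ (by simp)
        · exact hmemc v (by simp [hv])
    · intro p hp
      rw [hh'] at hp
      simp only [List.map_append, List.map_cons, List.map_nil, List.mem_append,
        List.mem_cons, List.not_mem_nil, or_false] at hp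
      rcases hp with ((hp | hp) | hp) | hp
      · exact hedgeH _ hp
      · subst hp; constructor <;> omega
      · subst hp
        constructor <;> simp <;> omega
      · subst hp
        refine ⟨by omega, ?_⟩
        have := hmemc c₁ (by simp)
        omega
    · simp only [List.length_append, List.length_cons]
      omega
    · intro hem
      have harith := div3_superadd (5 * (m - (j + 2))) (5 * (j + 2))
      omega
  · -- bait red leaf
    set h' := (((H ++ [((x+2, x+4), true)]) ++ [((e₀, x+1), false)]) ++ [((x+1, x+3), false)])
        ++ [((x+3, b), false)] with hh'
    have hsub : ∀ y ∈ H, y ∈ h' := by intro y hy; simp [hh', hy]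
    have hj1 : ((e₀, x+1), false) ∈ h' := by simp [hh']
    have hj2 : ((x+1, x+3), false) ∈ h' := by simp [hh']
    have hj3 : ((x+3, b), false) ∈ h' := by simp [hh']
    have hL : ((x+1) :: (x+3) :: b :: c₁ :: L).Chain' (Rel h') := by
      refine List.isChain_cons_cons.2 ⟨⟨by omega, hj2⟩, ?_⟩
      refine List.isChain_cons_cons.2 ⟨⟨by omega, hj3⟩, ?_⟩
      exact chain_mono hchain hsub
    have hchainout := chain_ext hch hlast hsub hL ⟨by omega, hj1⟩
    have hlastout : (l ++ ((x+1) :: (x+3) :: b :: c₁ :: L)).getLast? = some s := by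
      rw [List.getLast?_append]
      simp only [List.getLast?_cons_cons, hlastc, Option.or_some, Option.some_or]
    refine (leafStep (e := j + 3) (K := 5 * m / 3 + (4 - j)) (V' := V + 20000) IH hchainout hlastout
      (by simp; omega) ?_ ?_ ?_ (by omega) ?_).mono (by omega)
    · intro v hv
      rcases List.mem_append.1 hv with hv | hv
      · exact lt_of_lt_of_le (hmeml v hv) (by omega)
      · simp only [List.mem_cons] at hv
        rcases hv with rfl | rfl | rfl | rfl | hv
        · omega
        · omega
        · exact hmemc _ (by simp)
        · exact hmemc _ (by simp)
        · exact hmemc v (by simp [hv])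
    · intro p hp
      rw [hh'] at hp
      simp only [List.map_append, List.map_cons, List.map_nil, List.mem_append,
        List.mem_cons, List.not_mem_nil, or_false] at hp
      rcases hp with (((hp | hp) | hp) | hp) | hp
      · exact hedgeH _ hp
      · subst hp; constructor <;> omega
      · subst hp; constructor <;> omega
      · subst hp; constructor <;> omega
      · subst hp
        refine ⟨by omega, ?_⟩
        have := hmemc b (by simp)
        omega
    · simp only [List.length_append, List.length_cons]
      omega
    · intro hem
      have harith := div3_superadd (5 * (m - (j + 3))) (5 * (j + 3))
      omega

end OnlineRamsey

namespace OnlineRamsey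

set_option maxHeartbeats 2000000 in
theorem main (n : ℕ) : ∀ m : ℕ, IHtype n m := by
  intro m
  induction m using Nat.strong_induction_on with
  | _ m IH =>
  intro h V l e₀ hch hlast hlen2 hmem hedge hgrow
  rcases Nat.eq_zero_or_pos m with rfl | hm
  · exact W.done (Or.inr (pathcopy hch (by omega)))
  have he₀V : e₀ < V := hmem _ (List.mem_of_getLast? hlast)
  have hfreshV : ∀ u v : ℕ, V ≤ v → (u, v) ∉ h.map Prod.fst := by
    intro u v hv hmm
    have := (hedge _ hmm).2
    simp only at this
    omega
  have hnewEdge : ∀ (u v : ℕ) (E : Hist), V ≤ v → ((u, v) ∉ E.map Prod.fst) →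
      (u, v) ∉ (h ++ E).map Prod.fst := by
    intro u v E hv hE hmm
    rw [List.map_append] at hmm
    rcases List.mem_append.1 hmm with hmm | hmm
    · exact hfreshV u v hv hmm
    · exact hE hmm
  have hedgeBig : ∀ (E : Hist), (∀ p ∈ E.map Prod.fst, p.1 < V + 20000 ∧ p.2 < V + 20000) →
      ∀ p ∈ (h ++ E).map Prod.fst, p.1 < V + 20000 ∧ p.2 < V + 20000 := by
    intro E hE p hp
    rw [List.map_append] at hp
    rcases List.mem_append.1 hp with hp | hp
    · have := hedge _ hp; omega
    · exact hE _ hp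
  have hsubBig : ∀ (E : Hist), ∀ x ∈ h, x ∈ h ++ E := fun E x hx => List.mem_append_left _ hx
  -- ====================== p1-red branch ======================
  have branchRed : W n (5 * m / 3 + 8) (h ++ [((V+4096, V+16384), true)]) := by
    have leaf : W n (5 * m / 3 + 6)
        (h ++ [((V+4096, V+16384), true), ((e₀, V+4097), false), ((V+4097, V+16385), false)]) := by
      set h' := h ++ [((V+4096, V+16384), true), ((e₀, V+4097), false), ((V+4097, V+16385), false)]
        with hh'
      have hL : ((V+4097) :: [V+16385]).Chain' (Rel h') :=
        List.isChain_pair.2 ⟨by omega, by simp [hh']⟩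
      have hchainout := chain_ext hch hlast (hsubBig _) hL ⟨by omega, by simp [hh']⟩
      refine leafStep (e := 2) (K := 5 * m / 3 + 6) (V' := V + 20000) (e₀' := V + 16385) IH hchainout ?_
        (by simp) ?_ ?_ (by simp; omega) (by omega) ?_
      · rw [List.getLast?_append]; rfl
      · intro v hv
        rcases List.mem_append.1 hv with hv | hv
        · exact lt_of_lt_of_le (hmem v hv) (by omega)
        · simp only [List.mem_cons, List.not_mem_nil, or_false] at hv
          rcases hv with rfl | rfl <;> omega
      · refine hedgeBig _ ?_
        intro p hp
        simp only [List.map_cons, List.map_nil, List.mem_cons, List.not_mem_nil, or_false] at hp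
        rcases hp with rfl | rfl | rfl <;> constructor <;> (first | (simp; omega) | simp | omega)
      · intro hem; omega
    have s1 : W n (5 * m / 3 + 7) (h ++ [((V+4096, V+16384), true), ((e₀, V+4097), false)]) := by
      refine wforced (V+4097, V+16385) (V+4096, V+16384) (by simp)
        (Or.inr ⟨by omega, by omega, by omega⟩) (by omega) ?_ ?_
      · refine hnewEdge _ _ _ (by omega) (by simp; try omega)
      · simpa only [List.append_assoc, List.cons_append, List.nil_append] using leaf
    refine wforced (e₀, V+4097) (V+4096, V+16384) (by simp)
      (Or.inl ⟨by omega, by omega, by omega⟩) (by omega) ?_ ?_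
    · refine hnewEdge _ _ _ (by omega) (by simp; try omega)
    · simpa only [List.append_assoc, List.cons_append, List.nil_append] using s1
  -- ====================== cap branches ======================
  -- generic facts for capBranch calls
  have capcall : ∀ (E : Hist) (x b c₁ s : ℕ) (L : List ℕ) (j : ℕ),
      ((x, b), true) ∈ h ++ E →
      ((b :: c₁ :: L).Chain' (Rel (h ++ E))) →
      ((c₁ :: L).getLast? = some s) →
      (∀ v ∈ b :: c₁ :: L, v < V + 20000) →
      e₀ < x → x + 5 ≤ b → b < c₁ → V ≤ x → x + 5 < V + 20000 →
      (∀ p ∈ E.map Prod.fst, (p.1 ≤ x ∨ b ≤ p.1) ∧ (p.2 ≤ x ∨ b ≤ p.2)) →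
      (∀ p ∈ E.map Prod.fst, p.1 < V + 20000 ∧ p.2 < V + 20000) →
      (L.length + 1 = j) → j ≤ 4 →
      W n (5 * m / 3 + (8 - j)) (h ++ E) := by
    intro E x b c₁ s L j hcap hchain hlastc hmemc h1 h2 h3 h4 h5 hmidE hedgeE hj1 hj2
    refine capBranch hm IH (chain_mono hch (hsubBig _)) hlast hlen2 hmem
      (hedgeBig _ hedgeE) hcap hchain hlastc hmemc h1 h2 h3 h4 h5 ?_ hj1 hj2 hgrow
    intro p hp
    rw [List.map_append] at hp
    rcases List.mem_append.1 hp with hp | hp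
    · have := hedge _ hp; omega
    · exact hmidE _ hp
  -- handy abbreviations for the probe edges
  -- p1 = (V+4096, V+16384), g1 = (V+1024,V+4096), g2 = (V+256,V+1024),
  -- g3 = (V+64,V+256), g4 = (V+16,V+64), conn = (e₀, V+16)
  -- ==================== connect branch ====================
  have hdl : l.dropLast ≠ [] := by
    refine List.ne_nil_of_length_pos ?_
    rw [List.length_dropLast]; omega
  obtain ⟨o, ho⟩ : ∃ o, l.dropLast.getLast? = some o := by
    cases hdl' : l.dropLast.getLast? with
    | none => exact absurd (List.getLast?_eq_none_iff.1 hdl') hdl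
    | some o => exact ⟨o, rfl⟩
  have hsplit : l.dropLast ++ [e₀] = l :=
    List.dropLast_append_getLast? e₀ (by rw [hlast]; rfl)
  have hoe₀ : Rel h o e₀ := by
    have hch' := hch
    rw [← hsplit] at hch'
    exact (List.isChain_append.1 hch').2.2 o ho e₀ rfl
  have hoV : o < V := hmem o ((List.dropLast_sublist l).subset (List.mem_of_getLast? ho))
  have hmemdl : ∀ v ∈ l.dropLast, v < V := fun v hv => hmem v ((List.dropLast_sublist l).subset hv)
  have connRedLeaf : W n (5 * m / 3 + 1)
      (h ++ [((V+4096, V+16384), false), ((V+1024, V+4096), false), ((V+256, V+1024), false),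
        ((V+64, V+256), false), ((V+16, V+64), false), ((e₀, V+16), true),
        ((o, V+1), false), ((V+1, V+64), false)]) := by
    set h' := h ++ [((V+4096, V+16384), false), ((V+1024, V+4096), false), ((V+256, V+1024), false),
        ((V+64, V+256), false), ((V+16, V+64), false), ((e₀, V+16), true),
        ((o, V+1), false), ((V+1, V+64), false)] with hh'
    have hL : ((V+1) :: [V+64, V+256, V+1024, V+4096, V+16384]).Chain' (Rel h') := by
      refine List.isChain_cons_cons.2 ⟨⟨by omega, by simp [hh']⟩, ?_⟩
      refine List.isChain_cons_cons.2 ⟨⟨by omega, by simp [hh']⟩, ?_⟩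
      refine List.isChain_cons_cons.2 ⟨⟨by omega, by simp [hh']⟩, ?_⟩
      refine List.isChain_cons_cons.2 ⟨⟨by omega, by simp [hh']⟩, ?_⟩
      exact List.isChain_pair.2 ⟨by omega, by simp [hh']⟩
    have hchainout : (l.dropLast ++ ((V+1) :: [V+64, V+256, V+1024, V+4096, V+16384])).Chain'
        (Rel h') := by
      refine (chain_mono hch.dropLast (hsubBig _)).append hL ?_
      intro x hx y hy
      rw [ho] at hx
      simp only [Option.mem_def, Option.some.injEq] at hx
      simp only [List.head?_cons, Option.mem_def, Option.some.injEq] at hy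
      subst hx; subst hy
      exact ⟨by omega, by simp [hh']⟩
    refine leafStep (e := 5) (K := 5 * m / 3 + 1) (V' := V + 20000) (e₀' := V + 16384)
      IH hchainout ?_ (by simp) ?_ ?_ ?_ (by omega) ?_
    · rw [List.getLast?_append]; rfl
    · intro v hv
      rcases List.mem_append.1 hv with hv | hv
      · exact lt_of_lt_of_le (hmemdl v hv) (by omega)
      · simp only [List.mem_cons, List.not_mem_nil, or_false] at hv
        rcases hv with rfl | rfl | rfl | rfl | rfl | rfl <;> omega
    · refine hedgeBig _ ?_
      intro p hp
      simp only [List.map_cons, List.map_nil, List.mem_cons, List.not_mem_nil, or_false] at hp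
      rcases hp with rfl | rfl | rfl | rfl | rfl | rfl | rfl | rfl <;>
        exact ⟨by simp; try omega, by simp; try omega⟩
    · have : (l.dropLast ++ ((V+1) :: [V+64, V+256, V+1024, V+4096, V+16384])).length
          = l.length + 5 := by
        simp [List.length_dropLast]; omega
      rw [this]; omega
    · intro hem; omega
  have connRed : W n (5 * m / 3 + 3)
      (h ++ [((V+4096, V+16384), false), ((V+1024, V+4096), false), ((V+256, V+1024), false),
        ((V+64, V+256), false), ((V+16, V+64), false), ((e₀, V+16), true)]) := by
    have s1 : W n (5 * m / 3 + 2)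
        (h ++ [((V+4096, V+16384), false), ((V+1024, V+4096), false), ((V+256, V+1024), false),
          ((V+64, V+256), false), ((V+16, V+64), false), ((e₀, V+16), true),
          ((o, V+1), false)]) := by
      refine wforced (V+1, V+64) (e₀, V+16) (by simp)
        (Or.inr ⟨by omega, by omega, by omega⟩) (by omega) ?_ ?_
      · refine hnewEdge _ _ _ (by omega) (by simp; try omega)
      · simpa only [List.append_assoc, List.cons_append, List.nil_append] using connRedLeaf
    refine wforced (o, V+1) (e₀, V+16) (by simp)
      (Or.inl ⟨hoe₀.1, by omega, by omega⟩) (by omega) ?_ ?_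
    · refine hnewEdge _ _ _ (by omega) (by simp; try omega)
    · simpa only [List.append_assoc, List.cons_append, List.nil_append] using s1
  have connBlue : W n (5 * m / 3 + 3)
      (h ++ [((V+4096, V+16384), false), ((V+1024, V+4096), false), ((V+256, V+1024), false),
        ((V+64, V+256), false), ((V+16, V+64), false), ((e₀, V+16), false)]) := by
    set h' := h ++ [((V+4096, V+16384), false), ((V+1024, V+4096), false), ((V+256, V+1024), false),
        ((V+64, V+256), false), ((V+16, V+64), false), ((e₀, V+16), false)] with hh'
    have hL : ((V+16) :: [V+64, V+256, V+1024, V+4096, V+16384]).Chain' (Rel h') := by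
      refine List.isChain_cons_cons.2 ⟨⟨by omega, by simp [hh']⟩, ?_⟩
      refine List.isChain_cons_cons.2 ⟨⟨by omega, by simp [hh']⟩, ?_⟩
      refine List.isChain_cons_cons.2 ⟨⟨by omega, by simp [hh']⟩, ?_⟩
      refine List.isChain_cons_cons.2 ⟨⟨by omega, by simp [hh']⟩, ?_⟩
      exact List.isChain_pair.2 ⟨by omega, by simp [hh']⟩
    have hchainout := chain_ext hch hlast (hsubBig _) hL ⟨by omega, by simp [hh']⟩
    refine leafStep (e := 6) (K := 5 * m / 3 + 3) (V' := V + 20000) (e₀' := V + 16384)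
      IH hchainout ?_ (by simp) ?_ ?_ (by simp; omega) (by omega) ?_
    · rw [List.getLast?_append]; rfl
    · intro v hv
      rcases List.mem_append.1 hv with hv | hv
      · exact lt_of_lt_of_le (hmem v hv) (by omega)
      · simp only [List.mem_cons, List.not_mem_nil, or_false] at hv
        rcases hv with rfl | rfl | rfl | rfl | rfl | rfl <;> omega
    · refine hedgeBig _ ?_
      intro p hp
      simp only [List.map_cons, List.map_nil, List.mem_cons, List.not_mem_nil, or_false] at hp
      rcases hp with rfl | rfl | rfl | rfl | rfl | rfl <;>
        exact ⟨by simp; try omega, by simp; try omega⟩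
    · intro hem; omega
  have nodeConn : W n (5 * m / 3 + 4)
      (h ++ [((V+4096, V+16384), false), ((V+1024, V+4096), false), ((V+256, V+1024), false),
        ((V+64, V+256), false), ((V+16, V+64), false)]) := by
    refine W.step (e₀, V+16) (by omega) ?_ (fun c => ?_)
    · refine hnewEdge _ _ _ (by omega) (by simp; try omega)
    · cases c
      · simpa only [List.append_assoc, List.cons_append, List.nil_append] using connBlue
      · simpa only [List.append_assoc, List.cons_append, List.nil_append] using connRed
  -- ==================== cap branches and growth cascade ====================
  have cap4 : W n (5 * m / 3 + 4)
      (h ++ [((V+4096, V+16384), false), ((V+1024, V+4096), false), ((V+256, V+1024), false),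
        ((V+64, V+256), false), ((V+16, V+64), true)]) := by
    refine capcall _ (V+16) (V+64) (V+256) (V+16384) [V+1024, V+4096, V+16384] 4
      (by simp) ?_ (by rfl) ?_ (by omega) (by omega) (by omega) (by omega) (by omega) ?_ ?_
      (by rfl) (by omega)
    · refine List.isChain_cons_cons.2 ⟨⟨by omega, by simp⟩, ?_⟩
      refine List.isChain_cons_cons.2 ⟨⟨by omega, by simp⟩, ?_⟩
      refine List.isChain_cons_cons.2 ⟨⟨by omega, by simp⟩, ?_⟩
      exact List.isChain_pair.2 ⟨by omega, by simp⟩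
    · intro v hv
      simp only [List.mem_cons, List.not_mem_nil, or_false] at hv
      rcases hv with rfl | rfl | rfl | rfl | rfl <;> omega
    · intro p hp
      simp only [List.map_cons, List.map_nil, List.mem_cons, List.not_mem_nil, or_false] at hp
      rcases hp with rfl | rfl | rfl | rfl | rfl <;>
        exact ⟨by simp; try omega, by simp; try omega⟩
    · intro p hp
      simp only [List.map_cons, List.map_nil, List.mem_cons, List.not_mem_nil, or_false] at hp
      rcases hp with rfl | rfl | rfl | rfl | rfl <;>
        exact ⟨by simp; try omega, by simp; try omega⟩
  have node4 : W n (5 * m / 3 + 5)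
      (h ++ [((V+4096, V+16384), false), ((V+1024, V+4096), false), ((V+256, V+1024), false),
        ((V+64, V+256), false)]) := by
    refine W.step (V+16, V+64) (by omega) ?_ (fun c => ?_)
    · refine hnewEdge _ _ _ (by omega) (by simp; try omega)
    · cases c
      · simpa only [List.append_assoc, List.cons_append, List.nil_append] using nodeConn
      · simpa only [List.append_assoc, List.cons_append, List.nil_append] using cap4
  have cap3 : W n (5 * m / 3 + 5)
      (h ++ [((V+4096, V+16384), false), ((V+1024, V+4096), false), ((V+256, V+1024), false),
        ((V+64, V+256), true)]) := by
    refine capcall _ (V+64) (V+256) (V+1024) (V+16384) [V+4096, V+16384] 3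
      (by simp) ?_ (by rfl) ?_ (by omega) (by omega) (by omega) (by omega) (by omega) ?_ ?_
      (by rfl) (by omega)
    · refine List.isChain_cons_cons.2 ⟨⟨by omega, by simp⟩, ?_⟩
      refine List.isChain_cons_cons.2 ⟨⟨by omega, by simp⟩, ?_⟩
      exact List.isChain_pair.2 ⟨by omega, by simp⟩
    · intro v hv
      simp only [List.mem_cons, List.not_mem_nil, or_false] at hv
      rcases hv with rfl | rfl | rfl | rfl <;> omega
    · intro p hp
      simp only [List.map_cons, List.map_nil, List.mem_cons, List.not_mem_nil, or_false] at hp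
      rcases hp with rfl | rfl | rfl | rfl <;>
        exact ⟨by simp; try omega, by simp; try omega⟩
    · intro p hp
      simp only [List.map_cons, List.map_nil, List.mem_cons, List.not_mem_nil, or_false] at hp
      rcases hp with rfl | rfl | rfl | rfl <;>
        exact ⟨by simp; try omega, by simp; try omega⟩
  have node3 : W n (5 * m / 3 + 6)
      (h ++ [((V+4096, V+16384), false), ((V+1024, V+4096), false), ((V+256, V+1024), false)]) := by
    refine W.step (V+64, V+256) (by omega) ?_ (fun c => ?_)
    · refine hnewEdge _ _ _ (by omega) (by simp; try omega)
    · cases c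
      · simpa only [List.append_assoc, List.cons_append, List.nil_append] using node4
      · simpa only [List.append_assoc, List.cons_append, List.nil_append] using cap3
  have cap2 : W n (5 * m / 3 + 6)
      (h ++ [((V+4096, V+16384), false), ((V+1024, V+4096), false), ((V+256, V+1024), true)]) := by
    refine capcall _ (V+256) (V+1024) (V+4096) (V+16384) [V+16384] 2
      (by simp) ?_ (by rfl) ?_ (by omega) (by omega) (by omega) (by omega) (by omega) ?_ ?_
      (by rfl) (by omega)
    · refine List.isChain_cons_cons.2 ⟨⟨by omega, by simp⟩, ?_⟩
      exact List.isChain_pair.2 ⟨by omega, by simp⟩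
    · intro v hv
      simp only [List.mem_cons, List.not_mem_nil, or_false] at hv
      rcases hv with rfl | rfl | rfl <;> omega
    · intro p hp
      simp only [List.map_cons, List.map_nil, List.mem_cons, List.not_mem_nil, or_false] at hp
      rcases hp with rfl | rfl | rfl <;>
        exact ⟨by simp; try omega, by simp; try omega⟩
    · intro p hp
      simp only [List.map_cons, List.map_nil, List.mem_cons, List.not_mem_nil, or_false] at hp
      rcases hp with rfl | rfl | rfl <;>
        exact ⟨by simp; try omega, by simp; try omega⟩
  have node2 : W n (5 * m / 3 + 7)
      (h ++ [((V+4096, V+16384), false), ((V+1024, V+4096), false)]) := by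
    refine W.step (V+256, V+1024) (by omega) ?_ (fun c => ?_)
    · refine hnewEdge _ _ _ (by omega) (by simp; try omega)
    · cases c
      · simpa only [List.append_assoc, List.cons_append, List.nil_append] using node3
      · simpa only [List.append_assoc, List.cons_append, List.nil_append] using cap2
  have cap1 : W n (5 * m / 3 + 7)
      (h ++ [((V+4096, V+16384), false), ((V+1024, V+4096), true)]) := by
    refine capcall _ (V+1024) (V+4096) (V+16384) (V+16384) [] 1
      (by simp) ?_ (by rfl) ?_ (by omega) (by omega) (by omega) (by omega) (by omega) ?_ ?_
      (by rfl) (by omega)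
    · exact List.isChain_pair.2 ⟨by omega, by simp⟩
    · intro v hv
      simp only [List.mem_cons, List.not_mem_nil, or_false] at hv
      rcases hv with rfl | rfl <;> omega
    · intro p hp
      simp only [List.map_cons, List.map_nil, List.mem_cons, List.not_mem_nil, or_false] at hp
      rcases hp with rfl | rfl <;>
        exact ⟨by simp; try omega, by simp; try omega⟩
    · intro p hp
      simp only [List.map_cons, List.map_nil, List.mem_cons, List.not_mem_nil, or_false] at hp
      rcases hp with rfl | rfl <;>
        exact ⟨by simp; try omega, by simp; try omega⟩
  have node1 : W n (5 * m / 3 + 8) (h ++ [((V+4096, V+16384), false)]) := by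
    refine W.step (V+1024, V+4096) (by omega) ?_ (fun c => ?_)
    · refine hnewEdge _ _ _ (by omega) (by simp; try omega)
    · cases c
      · simpa only [List.append_assoc, List.cons_append, List.nil_append] using node2
      · simpa only [List.append_assoc, List.cons_append, List.nil_append] using cap1
  refine W.step (V+4096, V+16384) (by omega) (hfreshV _ _ (by omega)) (fun c => ?_)
  cases c
  · exact node1
  · exact branchRed


end OnlineRamsey

namespace OnlineRamsey

theorem winAll (n : ℕ) (hn : 2 ≤ n) : W n (5 * (n - 2) / 3 + 12) [] := by
  have htarget : 5 * (n - 2) / 3 + 12 = (5 * (n - 2) / 3 + 11) + 1 := rfl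
  rw [htarget]
  refine W.step (1, 4) (by omega) (by simp) (fun c => ?_)
  cases c
  · -- blue
    refine (main n (n - 2) [(((1:ℕ), (4:ℕ)), false)] 5 [1, 4] 4 ?_ rfl (by simp) ?_ ?_
      (by simp; omega)).mono (by omega)
    · exact List.isChain_pair.2 ⟨by omega, by simp⟩
    · intro v hv
      simp only [List.mem_cons, List.not_mem_nil, or_false] at hv
      rcases hv with rfl | rfl <;> omega
    · intro p hp
      simp only [List.map_cons, List.map_nil, List.mem_cons, List.not_mem_nil, or_false] at hp
      subst hp; exact ⟨by omega, by omega⟩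
  · -- red
    have leaf : W n (5 * (n - 2) / 3 + 9)
        [(((1:ℕ), (4:ℕ)), true), (((0:ℕ), (2:ℕ)), false), (((2:ℕ), (5:ℕ)), false)] := by
      refine (main n (n - 3) [(((1:ℕ), (4:ℕ)), true), (((0:ℕ), (2:ℕ)), false),
        (((2:ℕ), (5:ℕ)), false)] 6 [0, 2, 5] 5 ?_ rfl (by simp) ?_ ?_ (by simp; omega)).mono ?_
      · refine List.isChain_cons_cons.2 ⟨⟨by omega, by simp⟩, ?_⟩
        exact List.isChain_pair.2 ⟨by omega, by simp⟩
      · intro v hv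
        simp only [List.mem_cons, List.not_mem_nil, or_false] at hv
        rcases hv with rfl | rfl | rfl <;> omega
      · intro p hp
        simp only [List.map_cons, List.map_nil, List.mem_cons, List.not_mem_nil, or_false] at hp
        rcases hp with rfl | rfl | rfl <;> exact ⟨by omega, by omega⟩
      · have : 5 * (n - 3) ≤ 5 * (n - 2) := by omega
        have := Nat.div_le_div_right (c := 3) this
        omega
    have s1 : W n (5 * (n - 2) / 3 + 10)
        [(((1:ℕ), (4:ℕ)), true), (((0:ℕ), (2:ℕ)), false)] := by
      refine wforced (2, 5) (1, 4) (by simp) (Or.inr ⟨by omega, by omega, by omega⟩)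
        (by omega) (by simp) ?_
      simpa using leaf
    have s0 : W n (5 * (n - 2) / 3 + 11) [(((1:ℕ), (4:ℕ)), true)] := by
      refine wforced (0, 2) (1, 4) (by simp) (Or.inl ⟨by omega, by omega, by omega⟩)
        (by omega) (by simp) ?_
      simpa using s1
    simpa using s0

theorem copy_path_one (h : Hist) : HasCopy (SimpleGraph.pathGraph 1) false h := by
  refine ⟨fun _ => 0, ?_, ?_⟩
  · intro i j hij
    have h1 : (i : ℕ) < (j : ℕ) := hij
    have h2 := j.2
    omega
  · intro i j hij _
    have h1 : (i : ℕ) < (j : ℕ) := hij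
    have h2 := j.2
    omega

end OnlineRamsey

/-- `r_o(X, P_n) ≤ (5/3) n + 10` for all `n ≥ 1`. -/
theorem stmt_8 (n : ℕ) (hn : 1 ≤ n) :
    (rOnline interMatching (SimpleGraph.pathGraph n) : ℝ) ≤ (5 : ℝ) / 3 * n + 10 := by
  rcases eq_or_lt_of_le hn with h1 | h2
  · -- n = 1
    subst h1
    have hwin : BuilderWinsFrom [] interMatching (SimpleGraph.pathGraph 1) 0 :=
      OnlineRamsey.extraction (OnlineRamsey.W.done (Or.inr (OnlineRamsey.copy_path_one _)))
    have hle : rOnline interMatching (SimpleGraph.pathGraph 1) ≤ 0 := Nat.sInf_le hwin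
    have hcast : (rOnline interMatching (SimpleGraph.pathGraph 1) : ℝ) ≤ 0 := by
      exact_mod_cast hle
    refine hcast.trans ?_
    norm_num
  · -- n ≥ 2
    have hwin : BuilderWinsFrom [] interMatching (SimpleGraph.pathGraph n)
        (5 * (n - 2) / 3 + 12) :=
      OnlineRamsey.extraction (OnlineRamsey.winAll n h2)
    have hle : rOnline interMatching (SimpleGraph.pathGraph n) ≤ 5 * (n - 2) / 3 + 12 :=
      Nat.sInf_le hwin
    have hcast : (rOnline interMatching (SimpleGraph.pathGraph n) : ℝ)
        ≤ ((5 * (n - 2) / 3 + 12 : ℕ) : ℝ) := by exact_mod_cast hle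
    refine hcast.trans ?_
    have h3 : ((5 * (n - 2) / 3 + 12 : ℕ) : ℝ) ≤ ((5 * (n - 2) : ℕ) : ℝ) / 3 + 12 := by
      push_cast
      have := Nat.cast_div_le (α := ℝ) (m := 5 * (n - 2)) (n := 3)
      push_cast at this
      linarith
    refine h3.trans ?_
    have h4 : ((5 * (n - 2) : ℕ) : ℝ) = 5 * ((n : ℝ) - 2) := by
      push_cast [Nat.cast_sub (by omega : 2 ≤ n)]
      ring
    rw [h4]
    linarith
end

section
/- For all n ≥ 4 and k ≥ 2, the online ordered Ramsey number r_o(M_k, P_n) is at most n + 2k - 4, where M_k is the serial k-edge matching. -/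
/-- The serial `k`-edge matching `M_k`: vertices `v_1 < w_1 < ⋯ < v_k < w_k` with edges `v_i w_i`. -/
def serialMatching (k : ℕ) : SimpleGraph (Fin (2 * k)) :=
  SimpleGraph.fromRel (fun i j => (i : ℕ) % 2 = 0 ∧ (j : ℕ) = (i : ℕ) + 1)

namespace S9


/-- max vertex appearing in a history -/
def maxV (h : Hist) : ℕ := (h.map (fun e => max e.1.1 e.1.2)).foldr max 0

lemma le_maxV {h : Hist} {e : (ℕ × ℕ) × Bool} (he : e ∈ h) :
    e.1.1 ≤ maxV h ∧ e.1.2 ≤ maxV h := by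
  induction h with
  | nil => cases he
  | cons a t ih =>
    rcases List.mem_cons.mp he with rfl | he
    · constructor
      · exact le_trans (le_max_left _ _) (le_max_left _ _)
      · exact le_trans (le_max_right _ _) (le_max_left _ _)
    · obtain ⟨h1, h2⟩ := ih he
      exact ⟨le_trans h1 (le_max_right _ _), le_trans h2 (le_max_right _ _)⟩

def fallback (h : Hist) : ℕ × ℕ := (maxV h + 1, maxV h + 2)

lemma fallback_valid (h : Hist) :
    (fallback h).1 < (fallback h).2 ∧ fallback h ∉ h.map Prod.fst := by
  refine ⟨by simp [fallback], ?_⟩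
  intro hmem
  simp only [List.mem_map] at hmem
  obtain ⟨e, he, heq⟩ := hmem
  have := (le_maxV he).1
  rw [heq] at this
  simp [fallback] at this

lemma win_now {h0 : Hist} {k l : ℕ} {G : SimpleGraph (Fin k)} {H : SimpleGraph (Fin l)} {N : ℕ}
    (hw : HasCopy G true h0 ∨ HasCopy H false h0) : BuilderWinsFrom h0 G H N :=
  ⟨fallback, fallback_valid, fun _ => ⟨0, Nat.zero_le _, hw⟩⟩

lemma winsFrom_mono {h0 : Hist} {k l : ℕ} {G : SimpleGraph (Fin k)} {H : SimpleGraph (Fin l)}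
    {N N' : ℕ} (hN : N ≤ N') (hw : BuilderWinsFrom h0 G H N) : BuilderWinsFrom h0 G H N' := by
  obtain ⟨B, hB, hP⟩ := hw
  exact ⟨B, hB, fun P => by obtain ⟨t, ht, hc⟩ := hP P; exact ⟨t, le_trans ht hN, hc⟩⟩

lemma playFrom_length (h0 : Hist) (B P) (t : ℕ) :
    (playFrom h0 B P t).length = h0.length + t := by
  induction t with
  | zero => rfl
  | succ t ih => simp only [playFrom, List.length_append, ih, List.length_cons,
      List.length_nil]; omega

lemma playFrom_prefix (h0 : Hist) (B P) (t : ℕ) :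
    ∃ s : Hist, playFrom h0 B P t = h0 ++ s := by
  induction t with
  | zero => exact ⟨[], by simp [playFrom]⟩
  | succ t ih =>
    obtain ⟨s, hs⟩ := ih
    refine ⟨s ++ [(B (playFrom h0 B P t), P (playFrom h0 B P t) (B (playFrom h0 B P t)))], ?_⟩
    rw [playFrom, hs, List.append_assoc, ← hs]

/-- The key composition lemma: play one fixed new edge, then follow the
strategy for whichever color Painter chose. -/
lemma step {h0 : Hist} {k l : ℕ} {G : SimpleGraph (Fin k)} {H : SimpleGraph (Fin l)} {N : ℕ}
    {u v : ℕ} (huv : u < v) (hnew : (u, v) ∉ h0.map Prod.fst)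
    (hc : ∀ c, BuilderWinsFrom (h0 ++ [((u, v), c)]) G H N) :
    BuilderWinsFrom h0 G H (N + 1) := by
  obtain ⟨Bt, hBtv, hBt⟩ := hc true
  obtain ⟨Bf, hBfv, hBf⟩ := hc false
  classical
  let B' : Hist → ℕ × ℕ := fun h =>
    if h.length = h0.length then
      (if (u, v) ∈ h.map Prod.fst then fallback h else (u, v))
    else
      match h[h0.length]? with
      | some e => if e.2 then Bt h else Bf h
      | none => fallback h
  have hB'1 : ∀ h : Hist, h.length = h0.length → (u, v) ∉ h.map Prod.fst → B' h = (u, v) := by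
    intro h h1 h2; simp only [B', if_pos h1, if_neg h2]
  have hB'2 : ∀ h : Hist, h.length ≠ h0.length → ∀ c : Bool,
      h[h0.length]? = some ((u, v), c) → B' h = if c then Bt h else Bf h := by
    intro h h1 c h2; simp only [B', if_neg h1, h2]
  have hB'valid : ValidBuilder B' := by
    intro h
    by_cases hl : h.length = h0.length
    · by_cases hmem : (u, v) ∈ h.map Prod.fst
      · have hbh : B' h = fallback h := by simp only [B', if_pos hl, if_pos hmem]
        rw [hbh]; exact fallback_valid h
      · rw [hB'1 h hl hmem]; exact ⟨huv, hmem⟩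
    · rcases hg : h[h0.length]? with _ | e
      · have hbh : B' h = fallback h := by simp only [B', if_neg hl, hg]
        rw [hbh]; exact fallback_valid h
      · rcases hb : e.2
        · have hbh : B' h = Bf h := by simp only [B', if_neg hl, hg, hb, if_neg (Bool.false_ne_true)]
          rw [hbh]; exact hBfv h
        · have hbh : B' h = Bt h := by simp only [B', if_neg hl, hg, hb]; rfl
          rw [hbh]; exact hBtv h
  refine ⟨B', hB'valid, fun P => ?_⟩
  set c0 := P h0 (u, v) with hc0
  set h1 : Hist := h0 ++ [((u, v), c0)] with hh1
  set Bc := if c0 then Bt else Bf with hBc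
  have key : ∀ t, playFrom h0 B' P (t + 1) = playFrom h1 Bc P t := by
    intro t
    induction t with
    | zero =>
      show h0 ++ [(B' h0, P h0 (B' h0))] = h1
      rw [hB'1 h0 rfl hnew, hh1, ← hc0]
    | succ t ih =>
      have hlen : (playFrom h1 Bc P t).length ≠ h0.length := by
        rw [playFrom_length]; simp only [hh1, List.length_append, List.length_cons,
          List.length_nil]; omega
      obtain ⟨s, hs⟩ := playFrom_prefix h1 Bc P t
      have hget : (playFrom h1 Bc P t)[h0.length]? = some ((u, v), c0) := by
        rw [hs, hh1, List.append_assoc,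
          List.getElem?_append_right (Nat.le_refl _)]
        simp
      have hB'eq : B' (playFrom h1 Bc P t) = Bc (playFrom h1 Bc P t) := by
        rw [hB'2 _ hlen c0 hget, hBc]
        rcases c0 <;> simp
      show playFrom h0 B' P (t + 1) ++ _ = playFrom h1 Bc P t ++ _
      rw [ih, hB'eq]
  have hwin : ∃ t ≤ N, HasCopy G true (playFrom h1 Bc P t) ∨
      HasCopy H false (playFrom h1 Bc P t) := by
    rcases hc0b : c0
    · rw [hh1, hBc, hc0b]; simp only [if_neg (Bool.false_ne_true)]; exact hBf P
    · rw [hh1, hBc, hc0b]; simp only [if_pos rfl]; exact hBt P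
  obtain ⟨t, ht, hcopy⟩ := hwin
  exact ⟨t + 1, by omega, by rw [key t]; exact hcopy⟩



def Red (h : Hist) (a b : ℕ) : Prop := ((a, b), true) ∈ h
def Blue (h : Hist) (a b : ℕ) : Prop := ((a, b), false) ∈ h

def Used (h : Hist) (w : ℕ) : Prop := ∃ e ∈ h, e.1.1 = w ∨ e.1.2 = w

/-- no used vertex strictly inside the interval (a,b) -/
def FreeI (h : Hist) (a b : ℕ) : Prop := ∀ w, a < w → w < b → ¬ Used h w

lemma used_append {h : Hist} {x y w : ℕ} {c : Bool} (hu : Used (h ++ [((x, y), c)]) w) :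
    Used h w ∨ w = x ∨ w = y := by
  obtain ⟨f, hf, hor⟩ := hu
  rcases List.mem_append.mp hf with hf | hf
  · exact Or.inl ⟨f, hf, hor⟩
  · simp only [List.mem_singleton] at hf
    subst hf
    simp only at hor
    rcases hor with h1 | h1 <;> omega

lemma freeI_append {h : Hist} {a b x y : ℕ} {c : Bool} (hf : FreeI h a b)
    (hx : x ≤ a ∨ b ≤ x) (hy : y ≤ a ∨ b ≤ y) : FreeI (h ++ [((x, y), c)]) a b := by
  intro w hw1 hw2 hu
  rcases used_append hu with hu | rfl | rfl
  · exact hf w hw1 hw2 hu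
  · rcases hx with h1 | h1 <;> omega
  · rcases hy with h1 | h1 <;> omega

lemma freeI_sub {h : Hist} {a b a' b' : ℕ} (hf : FreeI h a b) (ha : a ≤ a') (hb : b' ≤ b) :
    FreeI h a' b' := fun w h1 h2 => hf w (by omega) (by omega)

lemma not_mem_map_fst_of_unused {h : Hist} {u v : ℕ} (hu : ¬ Used h v) :
    (u, v) ∉ h.map Prod.fst := by
  intro hm
  simp only [List.mem_map] at hm
  obtain ⟨e, he, heq⟩ := hm
  exact hu ⟨e, he, Or.inr (by rw [heq])⟩

/-- serial chain of red edges -/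
def SerialChain (h : Hist) (l : List (ℕ × ℕ)) : Prop :=
  (∀ e ∈ l, e.1 < e.2 ∧ Red h e.1 e.2) ∧ l.Chain' (fun e f => e.2 < f.1)

def redTop (l : List (ℕ × ℕ)) : ℕ := ((l.getLast?).map Prod.snd).getD 0

lemma serialChain_append_hist {h : Hist} {l} (hs : SerialChain h l) (e : (ℕ × ℕ) × Bool) :
    SerialChain (h ++ [e]) l :=
  ⟨fun f hf => ⟨(hs.1 f hf).1, List.mem_append_left _ (hs.1 f hf).2⟩, hs.2⟩

lemma redTop_lt_iff {l : List (ℕ × ℕ)} {x : ℕ} (hx : redTop l < x) :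
    ∀ e ∈ l.getLast?, e.2 < x := by
  intro e he
  rw [Option.mem_def] at he
  simpa [redTop, he] using hx

lemma serialChain_snoc {h : Hist} {l} {x y : ℕ} (hs : SerialChain h l)
    (htop : redTop l < x) (hxy : x < y) (hr : Red h x y) :
    SerialChain h (l ++ [(x, y)]) := by
  constructor
  · intro f hf
    rcases List.mem_append.mp hf with hf | hf
    · exact hs.1 f hf
    · simp only [List.mem_singleton] at hf; subst hf; exact ⟨hxy, hr⟩
  · refine List.IsChain.append hs.2 (List.isChain_singleton _) ?_
    intro a ha b hb
    simp only [List.head?_cons, Option.mem_def, Option.some.injEq] at hb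
    subst hb
    exact redTop_lt_iff htop a ha

lemma redTop_snoc (l : List (ℕ × ℕ)) (e : ℕ × ℕ) : redTop (l ++ [e]) = e.2 := by
  simp [redTop]

/-- the interleaved vertex list of a serial matching -/
def flat : List (ℕ × ℕ) → List ℕ
  | [] => []
  | e :: t => e.1 :: e.2 :: flat t

lemma flat_length (l : List (ℕ × ℕ)) : (flat l).length = 2 * l.length := by
  induction l with
  | nil => rfl
  | cons e t ih => simp [flat, ih]; omega

lemma flat_chain {h : Hist} {l} (hs : SerialChain h l) : (flat l).Chain' (· < ·) := by
  obtain ⟨h1, h2⟩ := hs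
  induction l with
  | nil => exact List.isChain_nil
  | cons e t ih =>
    rcases t with _ | ⟨f, t'⟩
    · simp [flat, List.Chain', List.isChain_cons_cons, (h1 e (by simp)).1]
    · have he := (h1 e (by simp)).1
      have hef : e.2 < f.1 := (List.isChain_cons_cons.mp h2).1
      have ihh := ih (fun g hg => h1 g (List.mem_cons_of_mem _ hg)) (List.isChain_cons_cons.mp h2).2
      simp only [flat, List.Chain', List.isChain_cons_cons] at ihh ⊢
      exact ⟨he, hef, ihh⟩

lemma flat_get (l : List (ℕ × ℕ)) (t : ℕ) (ht : t < l.length) :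
    (flat l)[2 * t]'(by rw [flat_length]; omega) = (l[t]'ht).1 ∧
    (flat l)[2 * t + 1]'(by rw [flat_length]; omega) = (l[t]'ht).2 := by
  induction l generalizing t with
  | nil => exact absurd ht (by simp)
  | cons e tl ih =>
    rcases t with _ | t
    · simp [flat]
    · have ht' : t < tl.length := by simpa using ht
      have hih := ih t ht'
      have h2 : 2 * (t + 1) = (2 * t) + 1 + 1 := by omega
      have h3 : 2 * (t + 1) + 1 = (2 * t + 1) + 1 + 1 := by omega
      constructor
      · simp only [flat, h2, List.getElem_cons_succ]
        simpa using hih.1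
      · simp only [flat, h3, List.getElem_cons_succ]
        simpa using hih.2

/-- extract a red serial matching copy -/
lemma hasCopy_matching {h : Hist} {k : ℕ} {l : List (ℕ × ℕ)}
    (hs : SerialChain h l) (hlen : l.length = k) :
    HasCopy (serialMatching k) true h := by
  have hfl : (flat l).length = 2 * k := by rw [flat_length, hlen]
  refine ⟨fun i => (flat l).get (Fin.cast hfl.symm i), ?_, ?_⟩
  · have hpw : (flat l).Pairwise (· < ·) :=
      List.isChain_iff_pairwise.mp (flat_chain hs)
    intro i j hij
    exact List.pairwise_iff_get.mp hpw _ _ hij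
  · intro i j hij hadj
    rw [serialMatching, SimpleGraph.fromRel_adj] at hadj
    obtain ⟨hne, hor⟩ := hadj
    have hji : (j : ℕ) = (i : ℕ) + 1 ∧ (i : ℕ) % 2 = 0 := by
      rcases hor with ⟨h1, h2⟩ | ⟨h1, h2⟩
      · exact ⟨h2, h1⟩
      · exfalso; have : (i : ℕ) < j := hij; omega
    obtain ⟨hj1, hi2⟩ := hji
    set t := (i : ℕ) / 2 with htdef
    have hi : (i : ℕ) = 2 * t := by omega
    have htl : t < l.length := by
      have := i.isLt; rw [hlen]; omega
    have hg := flat_get l t htl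
    show (((flat l).get (Fin.cast hfl.symm i), (flat l).get (Fin.cast hfl.symm j)), true) ∈ h
    have h1 : (flat l).get (Fin.cast hfl.symm i) = (l[t]'htl).1 := by
      have he : (Fin.cast hfl.symm i) = ⟨2 * t, by rw [flat_length]; have := i.isLt; omega⟩ := by
        apply Fin.ext; simp [hi]
      rw [he, List.get_eq_getElem]; exact hg.1
    have h2 : (flat l).get (Fin.cast hfl.symm j) = (l[t]'htl).2 := by
      have he : (Fin.cast hfl.symm j) = ⟨2 * t + 1, by rw [flat_length]; have := j.isLt; omega⟩ := by
        apply Fin.ext; simp [hj1, hi]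
      rw [he, List.get_eq_getElem]; exact hg.2
    rw [h1, h2]
    exact (hs.1 _ (List.getElem_mem htl)).2

/-- extract a blue increasing path copy -/
lemma hasCopy_path {h : Hist} {n : ℕ} {l : List ℕ}
    (hc : l.Chain' (fun a b => a < b ∧ Blue h a b)) (hlen : l.length = n) :
    HasCopy (SimpleGraph.pathGraph n) false h := by
  refine ⟨fun i => l.get (Fin.cast hlen.symm i), ?_, ?_⟩
  · have hpw : l.Pairwise (· < ·) :=
      List.isChain_iff_pairwise.mp (List.IsChain.imp (fun a b hab => hab.1) hc)
    intro i j hij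
    exact List.pairwise_iff_get.mp hpw _ _ hij
  · intro i j hij hadj
    rw [SimpleGraph.pathGraph_adj] at hadj
    have hj1 : (j : ℕ) = (i : ℕ) + 1 := by
      rcases hadj with h1 | h1
      · omega
      · exfalso; have : (i : ℕ) < j := hij; omega
    have hget := List.isChain_iff_getElem.mp hc (i : ℕ) (by rw [hlen]; have := j.isLt; omega)
    have e1 : (Fin.cast hlen.symm i) = ⟨(i : ℕ), by rw [hlen]; exact i.isLt⟩ := rfl
    have e2 : (Fin.cast hlen.symm j) = ⟨(i : ℕ) + 1, by rw [hlen]; rw [← hj1]; exact j.isLt⟩ := by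
      apply Fin.ext; simp [hj1]
    show (((l.get (Fin.cast hlen.symm i)), (l.get (Fin.cast hlen.symm j))), false) ∈ h
    rw [e1, e2]
    exact hget.2




-- path infrastructure
def Link (h : Hist) (r : ℕ) (a b : ℕ) : Prop :=
  a < b ∧ Blue h a b ∧ FreeI h a b ∧ a + 4 ^ r ≤ b

def PathOK (h : Hist) (r : ℕ) (l : List ℕ) : Prop := l.Chain' (Link h r)

def plast (l : List ℕ) : ℕ := l.getLast?.getD 0

lemma plast_cons_cons (a b : ℕ) (t : List ℕ) : plast (a :: b :: t) = plast (b :: t) := by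
  simp [plast, List.getLast?_cons_cons]

lemma plast_concat (l : List ℕ) (a : ℕ) : plast (l ++ [a]) = a := by
  simp [plast, List.getLast?_concat]

lemma used_le_maxV {h : Hist} {w : ℕ} (hu : Used h w) : w ≤ maxV h := by
  obtain ⟨e, he, hor⟩ := hu
  have := le_maxV he
  rcases hor with rfl | rfl
  · exact this.1
  · exact this.2

lemma used_of_red {h : Hist} {a b : ℕ} (hr : Red h a b) : Used h a ∧ Used h b :=
  ⟨⟨((a,b),true), hr, Or.inl rfl⟩, ⟨((a,b),true), hr, Or.inr rfl⟩⟩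

lemma used_of_blue {h : Hist} {a b : ℕ} (hr : Blue h a b) : Used h a ∧ Used h b :=
  ⟨⟨((a,b),false), hr, Or.inl rfl⟩, ⟨((a,b),false), hr, Or.inr rfl⟩⟩

lemma redTop_le_maxV {h : Hist} {l : List (ℕ × ℕ)} (hs : SerialChain h l) :
    redTop l ≤ maxV h := by
  rcases hl : l.getLast? with _ | e
  · simp [redTop, hl]
  · have hmem : e ∈ l := by
      obtain ⟨hne, heq⟩ := List.mem_getLast?_eq_getLast (by rw [hl]; rfl)
      rw [heq]; exact List.getLast_mem hne
    have := (hs.1 e hmem).2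
    have h2 := used_le_maxV (used_of_red this).2
    simpa [redTop, hl] using h2

lemma path_pairwise {h : Hist} {r : ℕ} {l : List ℕ} (hp : PathOK h r l) : l.Pairwise (· < ·) :=
  List.isChain_iff_pairwise.mp (List.IsChain.imp (fun _ _ hab => hab.1) hp)

lemma mem_le_plast' {l : List ℕ} (hp : l.Pairwise (· < ·)) : ∀ a ∈ l, a ≤ plast l := by
  induction l with
  | nil => intro a ha; cases ha
  | cons v t ih =>
    intro a ha
    rcases t with _ | ⟨b, t'⟩
    · simp at ha; simp [plast, ha]
    · rw [plast_cons_cons]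
      rcases List.mem_cons.mp ha with rfl | ha
      · have hb : a < b := (List.pairwise_cons.mp hp).1 b (by simp)
        have : b ≤ plast (b :: t') := ih (List.pairwise_cons.mp hp).2 b (by simp)
        omega
      · exact ih (List.pairwise_cons.mp hp).2 a ha

lemma mem_le_plast {l : List ℕ} (hp : l.Pairwise (· < ·)) {a : ℕ} (ha : a ∈ l) : a ≤ plast l :=
  mem_le_plast' hp a ha

lemma head_le_mem {v : ℕ} {t : List ℕ} (hp : (v :: t).Pairwise (· < ·)) {a : ℕ}
    (ha : a ∈ v :: t) : v ≤ a := by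
  rcases List.mem_cons.mp ha with rfl | ha
  · exact le_refl _
  · exact le_of_lt ((List.pairwise_cons.mp hp).1 a ha)

lemma link_extend {h : Hist} {r r' a b x y : ℕ} {c : Bool} (hl : Link h r a b) (hr : r' ≤ r)
    (hx : x ≤ a ∨ b ≤ x) (hy : y ≤ a ∨ b ≤ y) : Link (h ++ [((x, y), c)]) r' a b := by
  obtain ⟨h1, h2, h3, h4⟩ := hl
  refine ⟨h1, List.mem_append_left _ h2, ?_, ?_⟩
  · intro w hw1 hw2 hu
    rcases hw : hu with ⟨e, he, hor⟩
    rcases List.mem_append.mp he with he | he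
    · exact h3 w hw1 hw2 ⟨e, he, hor⟩
    · simp only [List.mem_singleton] at he
      subst he
      rcases hor with h5 | h5 <;> simp at h5 <;> subst h5
      · rcases hx with h6 | h6 <;> omega
      · rcases hy with h6 | h6 <;> omega
  · have : (4:ℕ) ^ r' ≤ 4 ^ r := Nat.pow_le_pow_right (by norm_num) hr
    omega

lemma pathOK_extend_low {h : Hist} {r r' x y : ℕ} {c : Bool} {v : ℕ} {t : List ℕ}
    (hp : PathOK h r (v :: t)) (hr : r' ≤ r) (hx : x ≤ v) (hy : y ≤ v) :
    PathOK (h ++ [((x, y), c)]) r' (v :: t) := by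
  have hpw := path_pairwise hp
  simp only [PathOK, List.Chain', List.isChain_iff_getElem] at hp ⊢
  intro i hi
  have hold := hp i hi
  have hmem : (v :: t).get ⟨i, by omega⟩ ∈ v :: t := List.get_mem _ _
  have hva : v ≤ (v :: t).get ⟨i, by omega⟩ := head_le_mem hpw hmem
  simp only [List.get_eq_getElem] at hva
  exact link_extend hold hr (Or.inl (by omega)) (Or.inl (by omega))

lemma pathOK_extend_high {h : Hist} {r r' x y M : ℕ} {c : Bool} {l : List ℕ}
    (hp : PathOK h r l) (hr : r' ≤ r) (hM : ∀ w ∈ l, w ≤ M) (hx : M ≤ x) (hy : M ≤ y) :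
    PathOK (h ++ [((x, y), c)]) r' l := by
  simp only [PathOK, List.Chain', List.isChain_iff_getElem] at hp ⊢
  intro i hi
  have hold := hp i hi
  have hmem : l.get ⟨i + 1, by omega⟩ ∈ l := List.get_mem _ _
  have hb := hM _ hmem
  simp only [List.get_eq_getElem] at hb
  exact link_extend hold hr (Or.inr (by omega)) (Or.inr (by omega))

lemma pathOK_mono {h : Hist} {r r' : ℕ} {l : List ℕ} (hp : PathOK h r l) (hr : r' ≤ r) :
    PathOK h r' l := by
  refine List.IsChain.imp ?_ hp
  intro a b ⟨h1, h2, h3, h4⟩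
  have : (4:ℕ) ^ r' ≤ 4 ^ r := Nat.pow_le_pow_right (by norm_num) hr
  exact ⟨h1, h2, h3, by omega⟩

lemma pathOK_blue {h : Hist} {r : ℕ} {l : List ℕ} (hp : PathOK h r l) :
    l.Chain' (fun a b => a < b ∧ Blue h a b) :=
  List.IsChain.imp (fun _ _ hab => ⟨hab.1, hab.2.1⟩) hp



lemma not_mem_map_fst_of_unused_fst {h : Hist} {u v : ℕ} (hu : ¬ Used h u) :
    (u, v) ∉ h.map Prod.fst := by
  intro hm
  simp only [List.mem_map] at hm
  obtain ⟨e, he, heq⟩ := hm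
  exact hu ⟨e, he, Or.inl (by rw [heq])⟩

lemma blue_append (h : Hist) (a b : ℕ) : Blue (h ++ [((a, b), false)]) a b :=
  List.mem_append_right _ (by simp)

lemma red_append (h : Hist) (a b : ℕ) : Red (h ++ [((a, b), true)]) a b :=
  List.mem_append_right _ (by simp)

/-- state invariants -/
def InvA (n k r : ℕ) (h : Hist) (lo v1 v2 : ℕ) (rest : List ℕ) (reds : List (ℕ × ℕ)) : Prop :=
  PathOK h r (v1 :: v2 :: rest) ∧ 2 + rest.length ≤ n - 1 ∧
  SerialChain h reds ∧ reds.length ≤ k - 1 ∧ redTop reds ≤ lo ∧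
  lo + 4 ^ r ≤ v1 ∧ FreeI h lo v1 ∧ (∀ w, Used h w → w ≤ plast (v1 :: v2 :: rest))

def InvBL (n k r : ℕ) (h : Hist) (v1 v2 : ℕ) (rest : List ℕ) (L : List (ℕ × ℕ)) (x : ℕ) : Prop :=
  PathOK h r (v1 :: v2 :: rest) ∧ 2 + rest.length ≤ n - 1 ∧
  SerialChain h (L ++ [(x, v1)]) ∧ L.length + 1 ≤ k - 1 ∧
  (∀ w, Used h w → w ≤ plast (v1 :: v2 :: rest))

def InvBR (n k r : ℕ) (h : Hist) (lo v1 v2 : ℕ) (rest : List ℕ)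
    (L : List (ℕ × ℕ)) (rr : ℕ × ℕ) : Prop :=
  PathOK h r (v1 :: v2 :: rest) ∧ 2 + rest.length ≤ n - 1 ∧
  SerialChain h (L ++ [rr]) ∧ L.length + 1 ≤ k - 1 ∧ redTop L ≤ lo ∧
  lo + 4 ^ r ≤ v1 ∧ FreeI h lo v1 ∧ plast (v1 :: v2 :: rest) ≤ rr.1

def InvC (n k r : ℕ) (h : Hist) (lo w1 : ℕ) (tl : List ℕ)
    (L : List (ℕ × ℕ)) (rr : ℕ × ℕ) : Prop :=
  PathOK h r (w1 :: tl) ∧ 1 + tl.length ≤ n - 2 ∧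
  SerialChain h (L ++ [rr]) ∧ L.length + 1 ≤ k - 1 ∧ redTop L ≤ lo ∧
  lo + 4 ^ r ≤ w1 ∧ FreeI h lo w1 ∧ plast (w1 :: tl) ≤ rr.1

def InvD (k : ℕ) (h : Hist) (reds : List (ℕ × ℕ)) : Prop :=
  SerialChain h reds ∧ reds.length ≤ k - 1

theorem main (n k : ℕ) (hn : 4 ≤ n) (hk : 2 ≤ k) : ∀ r (h : Hist),
    ((∃ lo v1 v2 rest reds, InvA n k r h lo v1 v2 rest reds ∧
        (n - 1 - (2 + rest.length)) + max (k - reds.length) (2 * (k - reds.length) - 2) ≤ r) ∨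
     (∃ v1 v2 rest L x, InvBL n k r h v1 v2 rest L x ∧
        (n - 1 - (2 + rest.length)) + (2 * (k - (L.length + 1)) - 1) ≤ r) ∨
     (∃ lo v1 v2 rest L rr, InvBR n k r h lo v1 v2 rest L rr ∧
        (n - 1 - (2 + rest.length)) + (2 * (k - (L.length + 1)) - 1) ≤ r) ∨
     (∃ lo w1 tl L rr, InvC n k r h lo w1 tl L rr ∧
        (n - 2 - (1 + tl.length)) + 2 * (k - (L.length + 1)) ≤ r) ∨
     (∃ reds, InvD k h reds ∧ max (n - 1) (n + 2 * (k - reds.length) - 4) ≤ r)) →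
    BuilderWinsFrom h (serialMatching k) (SimpleGraph.pathGraph n) r := by
  intro r
  induction r with
  | zero =>
    intro h hcase
    exfalso
    rcases hcase with ⟨_,_,_,_,reds,hI,hphi⟩ | ⟨_,_,_,L,_,hI,hphi⟩ | ⟨_,_,_,_,L,_,hI,hphi⟩ |
      ⟨_,_,_,L,_,hI,hphi⟩ | ⟨reds,hI,hphi⟩
    · have := hI.2.2.2.1; omega
    · have := hI.2.2.2.1; omega
    · have := hI.2.2.2.1; omega
    · have := hI.2.2.2.1; omega
    · omega
  | succ r ih =>
    intro h hcase
    have hpow : (4:ℕ) ^ (r + 1) = 4 * 4 ^ r := by ring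
    have hpow1 : (1:ℕ) ≤ 4 ^ r := Nat.one_le_pow _ _ (by norm_num)
    rcases hcase with ⟨lo,v1,v2,rest,reds,hI,hphi⟩ | ⟨v1,v2,rest,L,x,hI,hphi⟩ |
      ⟨lo,v1,v2,rest,L,rr,hI,hphi⟩ | ⟨lo,w1,tl,L,rr,hI,hphi⟩ | ⟨reds,hI,hphi⟩
    -- ============ CASE A ============
    · obtain ⟨hPath, hplen, hSC, hmlen, hrtop, hgap, hfree, hmax⟩ := hI
      set g := lo + 4 ^ r with hgdef
      have hg1 : lo < g := by omega
      have hg2 : g < v1 := by omega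
      have hgu : ¬ Used h g := hfree g hg1 hg2
      have hv1mem : v1 ≤ plast (v1 :: v2 :: rest) :=
        mem_le_plast (path_pairwise hPath) (by simp)
      refine step hg2 (not_mem_map_fst_of_unused_fst hgu) ?_
      intro c
      rcases c with _ | _
      · -- blue
        have hLink : Link (h ++ [((g, v1), false)]) r g v1 := by
          refine ⟨hg2, blue_append h g v1, ?_, by omega⟩
          exact freeI_append (freeI_sub hfree (le_of_lt hg1) le_rfl) (Or.inl le_rfl) (Or.inr le_rfl)
        have hPath' : PathOK (h ++ [((g, v1), false)]) r (g :: v1 :: v2 :: rest) :=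
          List.isChain_cons_cons.mpr ⟨hLink, pathOK_extend_low hPath (Nat.le_succ r) (le_of_lt hg2) le_rfl⟩
        by_cases hwin : 3 + rest.length = n
        · refine win_now (Or.inr (hasCopy_path (pathOK_blue hPath') ?_))
          simp; omega
        · apply ih
          left
          refine ⟨lo, g, v1, v2 :: rest, reds, ⟨hPath', by simp; omega,
            serialChain_append_hist hSC _, hmlen, hrtop, by omega,
            freeI_append (freeI_sub hfree le_rfl (le_of_lt hg2)) (Or.inr le_rfl)
              (Or.inr (le_of_lt hg2)), ?_⟩, ?_⟩
          · intro w hw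
            rw [plast_cons_cons]
            rcases used_append hw with hw | rfl | rfl
            · exact hmax w hw
            · omega
            · exact hv1mem
          · try simp only [List.length_nil, List.length_cons, List.length_append] at hphi
            try simp only [List.length_nil, List.length_cons, List.length_append]
            omega
      · -- red
        have hRed : Red (h ++ [((g, v1), true)]) g v1 := red_append h g v1
        have hSC' : SerialChain (h ++ [((g, v1), true)]) (reds ++ [(g, v1)]) :=
          serialChain_snoc (serialChain_append_hist hSC _)
            (lt_of_le_of_lt hrtop hg1) hg2 hRed
        by_cases hwink : reds.length + 1 = k
        · refine win_now (Or.inl (hasCopy_matching hSC' ?_))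
          simp; omega
        · apply ih
          right; left
          refine ⟨v1, v2, rest, reds, g, ⟨pathOK_extend_low hPath (Nat.le_succ r)
            (le_of_lt hg2) le_rfl, hplen, hSC', by omega, ?_⟩, ?_⟩
          · intro w hw
            rcases used_append hw with hw | rfl | rfl
            · exact hmax w hw
            · omega
            · exact hv1mem
          · try simp only [List.length_nil, List.length_cons, List.length_append] at hphi
            try simp only [List.length_nil, List.length_cons, List.length_append]
            omega
    -- ============ CASE BL ============
    · obtain ⟨hPath, hplen, hSC, hmlen, hmax⟩ := hI
      set lst := plast (v1 :: v2 :: rest) with hlstdef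
      set cc := lst + 4 ^ r with hccdef
      have hpw := path_pairwise hPath
      have hv2lst : v2 ≤ lst := mem_le_plast hpw (by simp)
      have hv12 : v1 < v2 := (List.isChain_cons_cons.mp hPath).1.1
      have hlstc : lst < cc := by omega
      have hcu : ¬ Used h cc := fun hu => by have := hmax cc hu; omega
      have hlstmem : lst ∈ v1 :: v2 :: rest := by
        have : plast (v1 :: v2 :: rest) ∈ v1 :: v2 :: rest := by
          simp only [plast]
          rcases hg : (v1 :: v2 :: rest).getLast? with _ | e
          · simp at hg
          · obtain ⟨hne, heq⟩ := List.mem_getLast?_eq_getLast (by rw [hg]; rfl)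
            simp only [Option.getD_some, heq]
            exact List.getLast_mem hne
        exact this
      refine step hlstc (fun hm => by
        simp only [List.mem_map] at hm
        obtain ⟨e, he, heq⟩ := hm
        exact hcu ⟨e, he, Or.inr (by rw [heq])⟩) ?_
      intro c
      rcases c with _ | _
      · -- blue : extend path on the right
        have hLink : Link (h ++ [((lst, cc), false)]) r lst cc := by
          refine ⟨hlstc, blue_append h lst cc, ?_, by omega⟩
          intro w hw1 hw2 hu
          rcases used_append hu with hu | rfl | rfl
          · have := hmax w hu; omega
          · omega
          · omega
        have hPath' : PathOK (h ++ [((lst, cc), false)]) r ((v1 :: v2 :: rest) ++ [cc]) := by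
          refine List.IsChain.append ?_ (List.isChain_singleton _) ?_
          · exact pathOK_extend_high hPath (Nat.le_succ r) (fun w hw => mem_le_plast hpw hw)
              le_rfl (by omega)
          · intro a ha b hb
            simp only [List.head?_cons, Option.mem_def, Option.some.injEq] at hb
            subst hb
            have : a = lst := by
              have := List.mem_getLast?_eq_getLast ha
              obtain ⟨hne, heq⟩ := this
              simp only [hlstdef, plast, List.getLast?_eq_getLast_of_ne_nil hne, heq,
                Option.getD_some]
            rw [this]; exact hLink
        by_cases hwin : 3 + rest.length = n
        · refine win_now (Or.inr (hasCopy_path (pathOK_blue hPath') ?_))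
          simp; omega
        · apply ih
          right; left
          have hre : (v1 :: v2 :: rest) ++ [cc] = v1 :: v2 :: (rest ++ [cc]) := by simp
          rw [hre] at hPath'
          refine ⟨v1, v2, rest ++ [cc], L, x, ⟨hPath', by simp; omega,
            serialChain_append_hist hSC _, hmlen, ?_⟩, ?_⟩
          · intro w hw
            rw [plast_cons_cons, show v2 :: (rest ++ [cc]) = (v2 :: rest) ++ [cc] from by simp,
              plast_concat]
            rcases used_append hw with hw | rfl | rfl
            · have := hmax w hw; omega
            · omega
            · omega
          · try simp only [List.length_nil, List.length_cons, List.length_append] at hphi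
            try simp only [List.length_nil, List.length_cons, List.length_append]
            omega
      · -- red : new rightmost matching edge, go to C
        have hRed : Red (h ++ [((lst, cc), true)]) lst cc := red_append h lst cc
        have hrt : redTop (L ++ [(x, v1)]) = v1 := redTop_snoc L (x, v1)
        have hSC' : SerialChain (h ++ [((lst, cc), true)]) ((L ++ [(x, v1)]) ++ [(lst, cc)]) := by
          refine serialChain_snoc (serialChain_append_hist hSC _) ?_ hlstc hRed
          rw [hrt]; omega
        by_cases hwink : L.length + 2 = k
        · refine win_now (Or.inl (hasCopy_matching hSC' ?_))
          simp; omega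
        · apply ih
          right; right; right; left
          have hL12 : Link h (r+1) v1 v2 := (List.isChain_cons_cons.mp hPath).1
          refine ⟨v1, v2, rest, L ++ [(x, v1)], (lst, cc), ⟨?_, by omega,
            hSC', by simp; omega, by rw [hrt], by have := hL12.2.2.2; omega, ?_, ?_⟩, ?_⟩
          · -- PathOK of the tail v2 :: rest
            have htail : PathOK h (r+1) (v2 :: rest) := (List.isChain_cons_cons.mp hPath).2
            exact pathOK_extend_high htail (Nat.le_succ r)
              (fun w hw => mem_le_plast hpw (List.mem_cons_of_mem _ hw)) le_rfl (by omega)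
          · -- FreeI v1 v2
            refine freeI_append hL12.2.2.1 (Or.inr ?_) (Or.inr ?_) <;> omega
          · -- plast (v2 :: rest) ≤ lst
            have hpl : plast (v2 :: rest) = lst := by
              rw [hlstdef, plast_cons_cons]
            show plast (v2 :: rest) ≤ lst
            omega
          · try simp only [List.length_nil, List.length_cons, List.length_append] at hphi
            try simp only [List.length_nil, List.length_cons, List.length_append]
            omega
    -- ============ CASE BR ============
    · obtain ⟨hPath, hplen, hSC, hmlen, hrtop, hgap, hfree, hrr⟩ := hI
      set g := lo + 4 ^ r with hgdef
      have hg1 : lo < g := by omega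
      have hg2 : g < v1 := by omega
      have hgu : ¬ Used h g := hfree g hg1 hg2
      have hpw := path_pairwise hPath
      have hv12 : v1 < v2 := (List.isChain_cons_cons.mp hPath).1.1
      have hv2lst : v2 ≤ plast (v1 :: v2 :: rest) := mem_le_plast hpw (by simp)
      refine step hg2 (not_mem_map_fst_of_unused_fst hgu) ?_
      intro c
      rcases c with _ | _
      · -- blue : extend path left
        have hLink : Link (h ++ [((g, v1), false)]) r g v1 := by
          refine ⟨hg2, blue_append h g v1, ?_, by omega⟩
          exact freeI_append (freeI_sub hfree (le_of_lt hg1) le_rfl) (Or.inl le_rfl) (Or.inr le_rfl)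
        have hPath' : PathOK (h ++ [((g, v1), false)]) r (g :: v1 :: v2 :: rest) :=
          List.isChain_cons_cons.mpr ⟨hLink, pathOK_extend_low hPath (Nat.le_succ r) (le_of_lt hg2) le_rfl⟩
        by_cases hwin : 3 + rest.length = n
        · refine win_now (Or.inr (hasCopy_path (pathOK_blue hPath') ?_))
          simp; omega
        · apply ih
          right; right; left
          refine ⟨lo, g, v1, v2 :: rest, L, rr, ⟨hPath', by simp; omega,
            serialChain_append_hist hSC _, hmlen, hrtop, by omega,
            freeI_append (freeI_sub hfree le_rfl (le_of_lt hg2)) (Or.inr le_rfl)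
              (Or.inr (le_of_lt hg2)), ?_⟩, ?_⟩
          · rw [plast_cons_cons]; exact hrr
          · try simp only [List.length_nil, List.length_cons, List.length_append] at hphi
            try simp only [List.length_nil, List.length_cons, List.length_append]
            omega
      · -- red : insert matching edge before rr, go to C
        have hRed : Red (h ++ [((g, v1), true)]) g v1 := red_append h g v1
        have hCh := (List.isChain_append.mp hSC.2)
        have hSCL : SerialChain h L :=
          ⟨fun e he => hSC.1 e (List.mem_append_left _ he), hCh.1⟩
        have hrr2 : rr.1 < rr.2 ∧ Red h rr.1 rr.2 := hSC.1 rr (List.mem_append_right _ (by simp))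
        have hSC' : SerialChain (h ++ [((g, v1), true)]) ((L ++ [(g, v1)]) ++ [rr]) := by
          refine serialChain_snoc ?_ ?_ hrr2.1 (List.mem_append_left _ hrr2.2)
          · exact serialChain_snoc (serialChain_append_hist hSCL _)
              (lt_of_le_of_lt hrtop hg1) hg2 hRed
          · rw [redTop_snoc]
            show v1 < rr.1
            omega
        by_cases hwink : L.length + 2 = k
        · refine win_now (Or.inl (hasCopy_matching hSC' ?_))
          simp; omega
        · apply ih
          right; right; right; left
          have hL12 : Link h (r+1) v1 v2 := (List.isChain_cons_cons.mp hPath).1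
          refine ⟨v1, v2, rest, L ++ [(g, v1)], rr, ⟨?_, by omega,
            hSC', by simp; omega, by rw [redTop_snoc], by have := hL12.2.2.2; omega, ?_, ?_⟩, ?_⟩
          · have htail : PathOK h (r+1) (v2 :: rest) := (List.isChain_cons_cons.mp hPath).2
            exact pathOK_extend_low htail (Nat.le_succ r) (by omega) (by omega)
          · refine freeI_append hL12.2.2.1 (Or.inl ?_) (Or.inl ?_) <;> omega
          · rw [← plast_cons_cons (a := v1)]; exact hrr
          · try simp only [List.length_nil, List.length_cons, List.length_append] at hphi
            try simp only [List.length_nil, List.length_cons, List.length_append]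
            omega
    -- ============ CASE C ============
    · obtain ⟨hPath, hqlen, hSC, hmlen, hrtop, hgap, hfree, hrr⟩ := hI
      have hCh := (List.isChain_append.mp hSC.2)
      have hSCL : SerialChain h L :=
        ⟨fun e he => hSC.1 e (List.mem_append_left _ he), hCh.1⟩
      have hrr2 : rr.1 < rr.2 ∧ Red h rr.1 rr.2 := hSC.1 rr (List.mem_append_right _ (by simp))
      have hw1rr : w1 ≤ rr.1 := by
        have := mem_le_plast (path_pairwise hPath) (show w1 ∈ w1 :: tl by simp)
        omega
      rcases tl with _ | ⟨w2, tl'⟩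
      · -- C with q = 1 : double probe (g, g')
        simp only [List.length_nil] at hqlen
        set g := lo + 4 ^ r with hgdef
        set g' := lo + 2 * 4 ^ r with hg'def
        have hg1 : lo < g := by omega
        have hgg' : g < g' := by omega
        have hg'w1 : g' < w1 := by omega
        have hgu : ¬ Used h g := hfree g hg1 (by omega)
        have hg'u : ¬ Used h g' := hfree g' (by omega) hg'w1
        refine step hgg' (not_mem_map_fst_of_unused_fst hgu) ?_
        intro c
        rcases c with _ | _
        · -- blue : fresh 2-path (g, g'), go to BR
          have hLink : Link (h ++ [((g, g'), false)]) r g g' := by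
            refine ⟨hgg', blue_append h g g', ?_, by omega⟩
            intro w hw1' hw2' hu
            rcases used_append hu with hu | rfl | rfl
            · exact hfree w (by omega) (by omega) hu
            · omega
            · omega
          apply ih
          right; right; left
          refine ⟨lo, g, g', [], L, rr, ⟨List.isChain_cons_cons.mpr ⟨hLink, List.isChain_singleton _⟩,
            by simp; omega, serialChain_append_hist hSC _, hmlen, hrtop, by omega, ?_, ?_⟩, ?_⟩
          · refine freeI_append (freeI_sub hfree le_rfl (by omega)) (Or.inr le_rfl)
              (Or.inr (by omega))
          · rw [plast_cons_cons]
            show plast [g'] ≤ rr.1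
            simp only [plast, List.getLast?_singleton, Option.getD_some]
            omega
          · try simp only [List.length_nil, List.length_cons, List.length_append] at hphi
            try simp only [List.length_nil, List.length_cons, List.length_append]
            omega
        · -- red : new interior matching edge, stay in C
          have hRed : Red (h ++ [((g, g'), true)]) g g' := red_append h g g'
          have hSC' : SerialChain (h ++ [((g, g'), true)]) ((L ++ [(g, g')]) ++ [rr]) := by
            refine serialChain_snoc ?_ ?_ hrr2.1 (List.mem_append_left _ hrr2.2)
            · exact serialChain_snoc (serialChain_append_hist hSCL _)
                (lt_of_le_of_lt hrtop hg1) hgg' hRed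
            · rw [redTop_snoc]
              show g' < rr.1
              omega
          by_cases hwink : L.length + 2 = k
          · refine win_now (Or.inl (hasCopy_matching hSC' ?_))
            simp; omega
          · apply ih
            right; right; right; left
            refine ⟨g', w1, [], L ++ [(g, g')], rr, ⟨?_, by simpa using hqlen,
              hSC', by simp; omega, by rw [redTop_snoc], by omega, ?_, ?_⟩, ?_⟩
            · exact pathOK_extend_low hPath (Nat.le_succ r) (by omega) (by omega)
            · refine freeI_append (freeI_sub hfree (by omega) le_rfl) (Or.inl (by omega))
                (Or.inl le_rfl)
            · exact hrr
            · try simp only [List.length_nil, List.length_cons, List.length_append] at hphi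
              try simp only [List.length_nil, List.length_cons, List.length_append]
              omega
      · -- C with q ≥ 2 : single probe (g, w1)
        simp only [List.length_cons] at hqlen
        set g := lo + 4 ^ r with hgdef
        have hg1 : lo < g := by omega
        have hg2 : g < w1 := by omega
        have hgu : ¬ Used h g := hfree g hg1 hg2
        have hw12 : w1 < w2 := (List.isChain_cons_cons.mp hPath).1.1
        have hL12 : Link h (r+1) w1 w2 := (List.isChain_cons_cons.mp hPath).1
        refine step hg2 (not_mem_map_fst_of_unused_fst hgu) ?_
        intro c
        rcases c with _ | _
        · -- blue : prepend g, go to BR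
          have hLink : Link (h ++ [((g, w1), false)]) r g w1 := by
            refine ⟨hg2, blue_append h g w1, ?_, by omega⟩
            exact freeI_append (freeI_sub hfree (le_of_lt hg1) le_rfl) (Or.inl le_rfl)
              (Or.inr le_rfl)
          have hPath' : PathOK (h ++ [((g, w1), false)]) r (g :: w1 :: w2 :: tl') :=
            List.isChain_cons_cons.mpr ⟨hLink, pathOK_extend_low hPath (Nat.le_succ r)
              (le_of_lt hg2) le_rfl⟩
          apply ih
          right; right; left
          refine ⟨lo, g, w1, w2 :: tl', L, rr, ⟨hPath', by simp; omega,
            serialChain_append_hist hSC _, hmlen, hrtop, by omega,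
            freeI_append (freeI_sub hfree le_rfl (le_of_lt hg2)) (Or.inr le_rfl)
              (Or.inr (le_of_lt hg2)), ?_⟩, ?_⟩
          · rw [plast_cons_cons]; exact hrr
          · try simp only [List.length_nil, List.length_cons, List.length_append] at hphi
            try simp only [List.length_nil, List.length_cons, List.length_append]
            omega
        · -- red : matching edge (g, w1), drop w1, stay in C
          have hRed : Red (h ++ [((g, w1), true)]) g w1 := red_append h g w1
          have hSC' : SerialChain (h ++ [((g, w1), true)]) ((L ++ [(g, w1)]) ++ [rr]) := by
            refine serialChain_snoc ?_ ?_ hrr2.1 (List.mem_append_left _ hrr2.2)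
            · exact serialChain_snoc (serialChain_append_hist hSCL _)
                (lt_of_le_of_lt hrtop hg1) hg2 hRed
            · rw [redTop_snoc]
              show w1 < rr.1
              have := mem_le_plast (path_pairwise hPath)
                (show w2 ∈ w1 :: w2 :: tl' by simp)
              have hple : plast (w1 :: w2 :: tl') ≤ rr.1 := hrr
              omega
          by_cases hwink : L.length + 2 = k
          · refine win_now (Or.inl (hasCopy_matching hSC' ?_))
            simp; omega
          · apply ih
            right; right; right; left
            refine ⟨w1, w2, tl', L ++ [(g, w1)], rr, ⟨?_, by omega,
              hSC', by simp; omega, by rw [redTop_snoc], by have := hL12.2.2.2; omega, ?_, ?_⟩, ?_⟩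
            · have htail : PathOK h (r+1) (w2 :: tl') := (List.isChain_cons_cons.mp hPath).2
              exact pathOK_extend_low htail (Nat.le_succ r) (by omega) (by omega)
            · refine freeI_append hL12.2.2.1 (Or.inl ?_) (Or.inl ?_) <;> omega
            · rw [← plast_cons_cons (a := w1)]; exact hrr
            · try simp only [List.length_nil, List.length_cons, List.length_append] at hphi
              try simp only [List.length_nil, List.length_cons, List.length_append]
              omega
    -- ============ CASE D ============
    · obtain ⟨hSC, hmlen⟩ := hI
      set V := maxV h with hVdef
      set g := V + 4 ^ r with hgdef
      set cc := V + 2 * 4 ^ r with hccdef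
      have hgc : g < cc := by omega
      have hgu : ¬ Used h g := fun hu => by have := used_le_maxV hu; omega
      refine step hgc (not_mem_map_fst_of_unused_fst hgu) ?_
      intro c
      rcases c with _ | _
      · -- blue : start a 2-path, go to A
        have hLink : Link (h ++ [((g, cc), false)]) r g cc := by
          refine ⟨hgc, blue_append h g cc, ?_, by omega⟩
          intro w hw1 hw2 hu
          rcases used_append hu with hu | rfl | rfl
          · have := used_le_maxV hu; omega
          · omega
          · omega
        apply ih
        left
        refine ⟨V, g, cc, [], reds, ⟨List.isChain_cons_cons.mpr ⟨hLink, List.isChain_singleton _⟩,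
          by simp; omega, serialChain_append_hist hSC _, hmlen,
          le_trans (redTop_le_maxV hSC) le_rfl, by omega, ?_, ?_⟩, ?_⟩
        · intro w hw1 hw2 hu
          rcases used_append hu with hu | rfl | rfl
          · have := used_le_maxV hu; omega
          · omega
          · omega
        · intro w hw
          rw [plast_cons_cons]
          show w ≤ plast [cc]
          simp only [plast, List.getLast?_singleton, Option.getD_some]
          rcases used_append hw with hw | rfl | rfl
          · have := used_le_maxV hw; omega
          · omega
          · omega
        · try simp only [List.length_nil, List.length_cons, List.length_append] at hphi
          try simp only [List.length_nil, List.length_cons, List.length_append]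
          omega
      · -- red : new matching edge at the right, stay in D
        have hRed : Red (h ++ [((g, cc), true)]) g cc := red_append h g cc
        have hSC' : SerialChain (h ++ [((g, cc), true)]) (reds ++ [(g, cc)]) :=
          serialChain_snoc (serialChain_append_hist hSC _)
            (lt_of_le_of_lt (redTop_le_maxV hSC) (by omega)) hgc hRed
        by_cases hwink : reds.length + 1 = k
        · refine win_now (Or.inl (hasCopy_matching hSC' ?_))
          simp; omega
        · apply ih
          right; right; right; right
          refine ⟨reds ++ [(g, cc)], ⟨hSC', by simp; omega⟩, ?_⟩
          try simp only [List.length_nil, List.length_cons, List.length_append] at hphi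
          try simp only [List.length_nil, List.length_cons, List.length_append]
          omega


end S9

/-- `r_o(M_k, P_n) ≤ n + 2k - 4` for all `n ≥ 4`, `k ≥ 2`. -/
theorem stmt_9 (n k : ℕ) (hn : 4 ≤ n) (hk : 2 ≤ k) :
    rOnline (serialMatching k) (SimpleGraph.pathGraph n) ≤ n + 2 * k - 4 := by
  have hw : BuilderWinsFrom [] (serialMatching k) (SimpleGraph.pathGraph n) (n + 2 * k - 4) := by
    apply S9.main n k hn hk
    right; right; right; right
    refine ⟨[], ⟨⟨by simp, List.isChain_nil⟩, by simp⟩, ?_⟩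
    simp only [List.length_nil]
    omega
  exact Nat.sInf_le hw
end

section
/- Let G be a red/blue edge-colored ordered graph with no red P_3 (no two red edges uv, vw with u < v < w sharing the middle vertex appropriately, i.e., no red path on 3 vertices in the order) such that every blue edge is adjacent to a red edge in the following forced sense: for every blue edge vw with v < w, either v is the right endpoint of some red edge, or w is the left endpoint of some red edge. If G contains a blue P_n, then G has at least 2(n-1) edges. -/
/-- There is a blue monotone path on `n` vertices (edges stored as increasing pairs). -/
def HasBluePath (Eblue : Finset (ℕ × ℕ)) (n : ℕ) : Prop :=
  ∃ f : ℕ → ℕ, StrictMono f ∧ ∀ j, j + 1 < n → (f j, f (j + 1)) ∈ Eblue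

/-- Key lemma for `r_o(P_3, P_n) ≥ 2n - 2`: in a red/blue edge-colored ordered graph with
no red `P_3`, in which every blue edge `vw` is forced (its left endpoint `v` is the right
endpoint of a red edge, or its right endpoint `w` is the left endpoint of a red edge),
the existence of a blue `P_n` implies there are at least `2(n-1)` edges. -/
theorem stmt_12 (n : ℕ)
    (Ered Eblue : Finset (ℕ × ℕ))
    (hredlt : ∀ e ∈ Ered, e.1 < e.2)
    (hbluelt : ∀ e ∈ Eblue, e.1 < e.2)
    (hdisj : Disjoint Ered Eblue)
    (hnoRedP3 : ¬ ∃ a b c : ℕ, a < b ∧ b < c ∧ (a, b) ∈ Ered ∧ (b, c) ∈ Ered)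
    (hforced : ∀ e ∈ Eblue,
      (∃ u, u < e.1 ∧ (u, e.1) ∈ Ered) ∨ (∃ x, e.2 < x ∧ (e.2, x) ∈ Ered))
    (hblueP : HasBluePath Eblue n) :
    2 * (n - 1) ≤ Ered.card + Eblue.card := by
  classical
  obtain ⟨f, hf, hpath⟩ := hblueP
  -- `R v`: v is the right endpoint of a red edge; `L v`: v is the left endpoint.
  set R : ℕ → Prop := fun v => ∃ u, u < v ∧ (u, v) ∈ Ered with hRdef
  set L : ℕ → Prop := fun v => ∃ x, v < x ∧ (v, x) ∈ Ered with hLdef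
  have hLR : ∀ v, R v → L v → False := by
    rintro v ⟨u, hu, hue⟩ ⟨x, hx, hxe⟩
    exact hnoRedP3 ⟨u, v, x, hu, hx, hue, hxe⟩
  have hstep : ∀ j, j + 1 < n → R (f j) ∨ L (f (j + 1)) := by
    intro j hj
    exact hforced _ (hpath j hj)
  have hLchain : ∀ d j, ¬ R (f j) → j + 1 + d < n → L (f (j + 1 + d)) := by
    intro d
    induction d with
    | zero =>
      intro j hjR hj
      simpa using (hstep j (by omega)).resolve_left hjR
    | succ d ih =>
      intro j hjR hj
      have hL1 : L (f (j + 1 + d)) := ih j hjR (by omega)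
      have hR1 : ¬ R (f (j + 1 + d)) := fun h => hLR _ h hL1
      have := (hstep (j + 1 + d) (by omega)).resolve_left hR1
      have heq : j + 1 + d + 1 = j + 1 + (d + 1) := by omega
      rwa [heq] at this
  have hLc : ∀ j i, ¬ R (f j) → j < i → i < n → L (f i) := by
    intro j i h hji hi
    have := hLchain (i - (j + 1)) j h (by omega)
    rwa [show j + 1 + (i - (j + 1)) = i by omega] at this
  -- assign a red edge to each blue path edge
  let g : ℕ → ℕ × ℕ := fun j =>
    if h : R (f j) then (h.choose, f j)
    else if h' : L (f (j + 1)) then (f (j + 1), h'.choose) else (0, 0)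
  have hmemg : ∀ j ∈ Finset.range (n - 1), g j ∈ Ered := by
    intro j hj
    rw [Finset.mem_range] at hj
    by_cases h : R (f j)
    · simp only [g, dif_pos h]
      exact h.choose_spec.2
    · have h' : L (f (j + 1)) := (hstep j (by omega)).resolve_left h
      simp only [g, dif_neg h, dif_pos h']
      exact h'.choose_spec.2
  have hinjg : Set.InjOn g (Finset.range (n - 1)) := by
    intro j hj j' hj' heq
    rw [Finset.coe_range, Set.mem_Iio] at hj hj'
    by_cases h : R (f j) <;> by_cases h2 : R (f j')
    · -- both via right endpoint: second coordinates equal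
      simp only [g, dif_pos h, dif_pos h2, Prod.mk.injEq] at heq
      exact hf.injective heq.2
    · have h2' : L (f (j' + 1)) := (hstep j' (by omega)).resolve_left h2
      simp only [g, dif_pos h, dif_neg h2, dif_pos h2', Prod.mk.injEq] at heq
      -- g j = (u, f j), g j' = (f (j'+1), x), so f (j'+1) = u < f j
      exfalso
      have hu : h.choose < f j := h.choose_spec.1
      have hlt : f (j' + 1) < f j := by rw [heq.1] at hu; exact hu
      have hjj : j' + 1 < j := hf.lt_iff_lt.mp hlt
      exact hLR _ h (hLc j' j h2 (by omega) (by omega))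
    · have h' : L (f (j + 1)) := (hstep j (by omega)).resolve_left h
      simp only [g, dif_neg h, dif_pos h', dif_pos h2, Prod.mk.injEq] at heq
      exfalso
      have hu : h2.choose < f j' := h2.choose_spec.1
      have hlt : f (j + 1) < f j' := by rw [← heq.1] at hu; exact hu
      have hjj : j + 1 < j' := hf.lt_iff_lt.mp hlt
      exact hLR _ h2 (hLc j j' h (by omega) (by omega))
    · have h' : L (f (j + 1)) := (hstep j (by omega)).resolve_left h
      have h2' : L (f (j' + 1)) := (hstep j' (by omega)).resolve_left h2
      simp only [g, dif_neg h, dif_pos h', dif_neg h2, dif_pos h2', Prod.mk.injEq] at heq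
      have := hf.injective heq.1
      omega
  have hred : n - 1 ≤ Ered.card := by
    have := Finset.card_le_card_of_injOn g hmemg hinjg
    simpa using this
  -- the blue path edges are distinct
  have hblue : n - 1 ≤ Eblue.card := by
    have hmemb : ∀ j ∈ Finset.range (n - 1), (f j, f (j + 1)) ∈ Eblue := by
      intro j hj
      rw [Finset.mem_range] at hj
      exact hpath j (by omega)
    have hinjb : Set.InjOn (fun j => (f j, f (j + 1))) (Finset.range (n - 1)) := by
      intro j _ j' _ heq
      simp only [Prod.mk.injEq] at heq
      exact hf.injective heq.1
    have := Finset.card_le_card_of_injOn _ hmemb hinjb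
    simpa using this
  omega
end

section
/- Let G be a red/blue edge-colored ordered graph containing no red copy of the intersecting matching X (no red edges ac and bd with a < b < c < d) in which every blue edge crosses some red edge (blue edge uv with u < v crosses red edge xy with x < y if x < u < y < v or u < x < v < y). If G contains a blue P_n, then G has at least (3/2)(n-1) edges. -/
/-- Key lemma for `r_o(X, P_n) ≥ (3/2)(n-1)`: in a red/blue edge-colored ordered graph with
no red intersecting matching `X`, in which every blue edge crosses some red edge, the
existence of a blue `P_n` implies there are at least `(3/2)(n-1)` edges. -/
theorem stmt_13 (n : ℕ)
    (Ered Eblue : Finset (ℕ × ℕ))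
    (hredlt : ∀ e ∈ Ered, e.1 < e.2)
    (hbluelt : ∀ e ∈ Eblue, e.1 < e.2)
    (hdisj : Disjoint Ered Eblue)
    (hnoRedX : ¬ ∃ a b c d : ℕ, a < b ∧ b < c ∧ c < d ∧ (a, c) ∈ Ered ∧ (b, d) ∈ Ered)
    (hcross : ∀ e ∈ Eblue, ∃ x y : ℕ, (x, y) ∈ Ered ∧
      ((x < e.1 ∧ e.1 < y ∧ y < e.2) ∨ (e.1 < x ∧ x < e.2 ∧ e.2 < y)))
    (hblueP : HasBluePath Eblue n) :
    (3 : ℝ) / 2 * ((n : ℝ) - 1) ≤ ((Ered.card + Eblue.card : ℕ) : ℝ) := by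
  obtain ⟨f, hf, hfb⟩ := hblueP
  rcases Nat.eq_zero_or_pos n with hn0 | hn1
  · subst hn0
    have h0 : (0 : ℝ) ≤ ((Ered.card + Eblue.card : ℕ) : ℝ) := Nat.cast_nonneg _
    norm_num
    linarith
  set m := n - 1 with hmdef
  have hm : m + 1 = n := Nat.succ_pred_eq_of_pos hn1
  -- Step 1: Eblue has at least m edges
  have h1 : m ≤ Eblue.card := by
    have := Finset.card_le_card_of_injOn (fun j => (f j, f (j + 1)))
      (s := Finset.range m) (t := Eblue)
      (fun j hj => hfb j (by simp only [Finset.mem_coe, Finset.mem_range] at hj; omega))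
      (fun a _ b _ hab => hf.injective (congrArg Prod.fst hab))
    simpa using this
  -- Step 2: choose a red edge and a witness point for each path edge
  have hex : ∀ j : ℕ, ∃ e : ℕ × ℕ, ∃ p : ℕ,
      j + 1 < n → e ∈ Ered ∧ f j < p ∧ p < f (j + 1) ∧ (p = e.1 ∨ p = e.2) := by
    intro j
    by_cases hj : j + 1 < n
    · obtain ⟨x, y, hxy, hc⟩ := hcross (f j, f (j + 1)) (hfb j hj)
      rcases hc with ⟨ha, hb, hc⟩ | ⟨ha, hb, hc⟩
      · exact ⟨(x, y), y, fun _ => ⟨hxy, hb, hc, Or.inr rfl⟩⟩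
      · exact ⟨(x, y), x, fun _ => ⟨hxy, ha, hb, Or.inl rfl⟩⟩
    · exact ⟨(0, 0), 0, fun h => absurd h hj⟩
  choose g p hgp using hex
  have hg : ∀ j ∈ Finset.range m, g j ∈ Ered := by
    intro j hj
    simp only [Finset.mem_range] at hj
    exact (hgp j (by omega)).1
  have hcount : m ≤ 2 * Ered.card := by
    have key : (Finset.range m).card = ∑ e ∈ (Finset.range m).image g,
        ((Finset.range m).filter (fun j => g j = e)).card :=
      Finset.card_eq_sum_card_fiberwise (fun j hj => Finset.mem_image_of_mem g hj)
    have hfib : ∀ e ∈ (Finset.range m).image g,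
        ((Finset.range m).filter (fun j => g j = e)).card ≤ 2 := by
      intro e _
      have hle : ((Finset.range m).filter (fun j => g j = e)).card
          ≤ ({e.1, e.2} : Finset ℕ).card := by
        apply Finset.card_le_card_of_injOn p
        · intro j hj
          simp only [Finset.mem_coe, Finset.mem_filter, Finset.mem_range] at hj
          obtain ⟨hjm, hje⟩ := hj
          obtain ⟨_, _, _, hor⟩ := hgp j (by omega)
          rcases hor with h | h <;> simp [h, hje]
        · intro a ha b hb hpab
          simp only [Finset.coe_filter, Set.mem_setOf_eq, Finset.mem_range] at ha hb
          obtain ⟨_, ha1, ha2, _⟩ := hgp a (by omega)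
          obtain ⟨_, hb1, hb2, _⟩ := hgp b (by omega)
          by_contra hne
          rcases Nat.lt_or_ge a b with h | h
          · have : f (a + 1) ≤ f b := hf.monotone (by omega)
            omega
          · have h' : b < a := by omega
            have : f (b + 1) ≤ f a := hf.monotone (by omega)
            omega
      have h2 : ({e.1, e.2} : Finset ℕ).card ≤ 2 := by
        apply (Finset.card_insert_le _ _).trans
        simp
      omega
    have hsum : ∑ e ∈ (Finset.range m).image g,
        ((Finset.range m).filter (fun j => g j = e)).card
        ≤ ((Finset.range m).image g).card * 2 := by
      calc _ ≤ ∑ _e ∈ (Finset.range m).image g, 2 := Finset.sum_le_sum hfib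
        _ = _ := by rw [Finset.sum_const, smul_eq_mul]
    have himg : ((Finset.range m).image g).card ≤ Ered.card :=
      Finset.card_le_card (Finset.image_subset_iff.mpr hg)
    have : (Finset.range m).card ≤ 2 * Ered.card := by
      rw [key]; omega
    simpa using this
  -- arithmetic conclusion
  have hmn : (m : ℝ) = (n : ℝ) - 1 := by
    have : ((m + 1 : ℕ) : ℝ) = (n : ℝ) := by rw [hm]
    push_cast at this
    linarith
  have hb' : (m : ℝ) ≤ (Eblue.card : ℝ) := by exact_mod_cast h1
  have hr' : (m : ℝ) ≤ 2 * (Ered.card : ℝ) := by exact_mod_cast hcount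
  push_cast
  linarith
end

section
/- Let G be a red/blue edge-colored ordered graph containing no red copy of K_{1,k} (no vertex u with k red edges to vertices w_1,...,w_k all to the right of u) such that for every blue edge vw with v < w, the vertex v is the center of a red K_{1,k-1} going rightward (v has at least k-1 red edges to vertices after v). If G contains a blue P_n, then G has at least k(n-1) edges. -/
/-- Key lemma for `r_o(K_{1,k}, P_n) ≥ k(n-1)`: in a red/blue edge-colored ordered graph
with no red rightward star `K_{1,k}`, in which the left endpoint of every blue edge is the
center of a red rightward `K_{1,k-1}`, the existence of a blue `P_n` implies there are at
least `k(n-1)` edges. -/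
theorem stmt_14 (n k : ℕ)
    (Ered Eblue : Finset (ℕ × ℕ))
    (hredlt : ∀ e ∈ Ered, e.1 < e.2)
    (hbluelt : ∀ e ∈ Eblue, e.1 < e.2)
    (hdisj : Disjoint Ered Eblue)
    (hnoRedStar : ¬ ∃ u : ℕ, ∃ S : Finset ℕ, S.card = k ∧
      ∀ w ∈ S, u < w ∧ (u, w) ∈ Ered)
    (hforced : ∀ e ∈ Eblue, ∃ S : Finset ℕ, S.card = k - 1 ∧
      ∀ w ∈ S, e.1 < w ∧ (e.1, w) ∈ Ered)
    (hblueP : HasBluePath Eblue n) :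
    k * (n - 1) ≤ Ered.card + Eblue.card := by
  obtain ⟨f, hmono, hpath⟩ := hblueP
  have hS : ∀ j : ℕ, ∃ S : Finset ℕ,
      (j + 1 < n → S.card = k - 1 ∧ ∀ w ∈ S, f j < w ∧ (f j, w) ∈ Ered) := by
    intro j
    by_cases h : j + 1 < n
    · obtain ⟨S, h1, h2⟩ := hforced _ (hpath j h)
      exact ⟨S, fun _ => ⟨h1, h2⟩⟩
    · exact ⟨∅, fun h' => absurd h' h⟩
  choose S hSp using hS
  -- Blue edges of the path
  have hBsub : (Finset.range (n-1)).image (fun j => (f j, f (j+1))) ⊆ Eblue := by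
    intro e he
    obtain ⟨j, hj, rfl⟩ := Finset.mem_image.mp he
    have := Finset.mem_range.mp hj
    exact hpath j (by omega)
  have hBcard : ((Finset.range (n-1)).image (fun j => (f j, f (j+1)))).card = n - 1 := by
    rw [Finset.card_image_of_injective _ (fun a b hab => hmono.injective (congrArg Prod.fst hab)),
      Finset.card_range]
  -- Red edges
  set R : Finset (ℕ × ℕ) :=
    (Finset.range (n-1)).biUnion (fun j => (S j).image (fun w => (f j, w))) with hR
  have hRsub : R ⊆ Ered := by
    intro e he
    obtain ⟨j, hj, he⟩ := Finset.mem_biUnion.mp he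
    obtain ⟨w, hw, rfl⟩ := Finset.mem_image.mp he
    have := Finset.mem_range.mp hj
    exact ((hSp j (by omega)).2 w hw).2
  have hRcard : R.card = (n - 1) * (k - 1) := by
    rw [hR, Finset.card_biUnion]
    · rw [Finset.sum_congr rfl (fun j hj => ?_), Finset.sum_const, Finset.card_range, smul_eq_mul]
      rw [Finset.card_image_of_injective _ (fun a b hab => congrArg Prod.snd hab)]
      exact (hSp j (by have := Finset.mem_range.mp hj; omega)).1
    · intro i hi j hj hij
      simp only [Finset.disjoint_left]
      intro e hei hej
      obtain ⟨w, hw, rfl⟩ := Finset.mem_image.mp hei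
      obtain ⟨w', hw', h⟩ := Finset.mem_image.mp hej
      exact hij (hmono.injective (congrArg Prod.fst h.symm))
  have h1 : (n - 1) * (k - 1) ≤ Ered.card := hRcard ▸ Finset.card_le_card hRsub
  have h2 : n - 1 ≤ Eblue.card := hBcard ▸ Finset.card_le_card hBsub
  rcases k with _ | k
  · simp
  · simp only [Nat.add_sub_cancel] at h1
    have : (k + 1) * (n - 1) = (n - 1) * k + (n - 1) := by ring
    omega
end
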